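/- arXiv:1405.0558 — 9 statements merged into one kernel-verified Lean document; each statement's English description precedes it below -/
import Mathlib

section
/- Recursive decomposition of the falling factorial basis matrix: for any order k >= 1 and sorted inputs x_1 < ... < x_n, the k-th order falling factorial basis matrix satisfies H^(k) = H^(k-1) * blockdiag(I_k, Δ^(k) L_{n-k}), where Δ^(k) = diag(x_{k+1}-x_1, ..., x_n-x_{n-k}) and L_m is the m×m lower triangular matrix of ones. -/
/-- The `k`-th order falling factorial basis function `h_j` (0-based index `j`)
over input points `xs`. -/
noncomputable def ffh (k : ℕ) (xs : ℕ → ℝ) (j : ℕ) (x : ℝ) : ℝ :=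
  if j ≤ k then ∏ ℓ ∈ Finset.range j, (x - xs ℓ)
  else (∏ ℓ ∈ Finset.range k, (x - xs (j - k + ℓ))) * (if xs (j - 1) < x then 1 else 0)

/-- The falling factorial basis matrix `H^(k)`, with `H_{ij} = h_j(x_i)`. -/
noncomputable def ffMatrix (n k : ℕ) (xs : ℕ → ℝ) : Matrix (Fin n) (Fin n) ℝ :=
  Matrix.of fun i j => ffh k xs j (xs i)

/-- Telescoping auxiliary function: the truncated degree-`m+1` basis function at grid points. -/
noncomputable def ffT (m : ℕ) (xs : ℕ → ℝ) (a i : ℕ) : ℝ :=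
  (∏ ℓ ∈ Finset.range (m + 1), (xs a - xs (i - (m + 1) + ℓ))) * (if i ≤ a then 1 else 0)

lemma ffT_key (m : ℕ) (xs : ℕ → ℝ) (hxs : StrictMono xs) (a i : ℕ) (hi : m + 1 ≤ i) :
    ffh m xs i (xs a) * (xs i - xs (i - (m + 1))) = ffT m xs a i - ffT m xs a (i + 1) := by
  have h1 : ¬ (i ≤ m) := by omega
  unfold ffh ffT
  have hiff : xs (i - 1) < xs a ↔ i ≤ a := by
    rw [hxs.lt_iff_lt]
    omega
  rw [if_neg h1]
  simp only [hiff]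
  have hTi : (∏ ℓ ∈ Finset.range (m + 1), (xs a - xs (i - (m + 1) + ℓ)))
      = (∏ ℓ ∈ Finset.range m, (xs a - xs (i - m + ℓ))) * (xs a - xs (i - (m + 1))) := by
    rw [Finset.prod_range_succ']
    rw [Finset.prod_congr rfl (fun ℓ _ => by congr 2; omega :
      ∀ ℓ ∈ Finset.range m, xs a - xs (i - (m + 1) + (ℓ + 1)) = xs a - xs (i - m + ℓ)),
      show i - (m + 1) + 0 = i - (m + 1) by omega]
  have hTi1 : (∏ ℓ ∈ Finset.range (m + 1), (xs a - xs (i + 1 - (m + 1) + ℓ)))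
      = (∏ ℓ ∈ Finset.range m, (xs a - xs (i - m + ℓ))) * (xs a - xs i) := by
    rw [Finset.prod_range_succ]
    rw [Finset.prod_congr rfl (fun ℓ _ => by congr 2; omega :
      ∀ ℓ ∈ Finset.range m, xs a - xs (i + 1 - (m + 1) + ℓ) = xs a - xs (i - m + ℓ)),
      show i + 1 - (m + 1) + m = i by omega]
  rw [hTi, hTi1]
  by_cases h2 : i + 1 ≤ a
  · rw [if_pos h2, if_pos (by omega : i ≤ a)]
    ring
  · by_cases h3 : i ≤ a
    · have hai : a = i := by omega
      rw [if_pos h3, if_neg h2, hai]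
      ring
    · rw [if_neg h3, if_neg h2]
      ring

/-- Recursive decomposition: `H^(k) = H^(k-1) * blockdiag(I_k, Δ^(k) L_{n-k})` for `k ≥ 1`,
where `Δ^(k) = diag(x_{k+1}-x_1, …, x_n-x_{n-k})` and `L_m` is the lower triangular
matrix of ones.  The block matrix `blockdiag(I_k, Δ^(k) L_{n-k})` has entries:
identity on the first `k` coordinates, and `x_i - x_{i-k}` in position `(i,j)`
whenever `k ≤ j ≤ i`. -/
theorem ffMatrix_recursion (n k : ℕ) (hk : 1 ≤ k) (xs : ℕ → ℝ) (hxs : StrictMono xs) :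
    ffMatrix n k xs =
      ffMatrix n (k - 1) xs *
        Matrix.of (fun i j : Fin n =>
          if (i : ℕ) < k then (if i = j then (1 : ℝ) else 0)
          else if k ≤ (j : ℕ) ∧ (j : ℕ) ≤ (i : ℕ) then xs i - xs ((i : ℕ) - k)
          else 0) := by
  obtain ⟨m, rfl⟩ : ∃ m, k = m + 1 := ⟨k - 1, by omega⟩
  have hk1 : m + 1 - 1 = m := by omega
  ext a b
  rw [Matrix.mul_apply]
  simp only [ffMatrix, Matrix.of_apply, hk1]
  by_cases hb : (b : ℕ) < m + 1
  · rw [Finset.sum_eq_single b]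
    · rw [if_pos hb, if_pos rfl, mul_one]
      unfold ffh
      rw [if_pos (by omega : (b : ℕ) ≤ m + 1), if_pos (by omega : (b : ℕ) ≤ m)]
    · intro i _ hib
      by_cases hi : (i : ℕ) < m + 1
      · rw [if_pos hi, if_neg hib, mul_zero]
      · rw [if_neg hi, if_neg (by omega : ¬ (m + 1 ≤ (b:ℕ) ∧ (b:ℕ) ≤ (i:ℕ))), mul_zero]
    · intro h; exact absurd (Finset.mem_univ b) h
  · push_neg at hb
    have hsum : (∑ i : Fin n, ffh m xs i (xs a) *
        (if (i : ℕ) < m + 1 then (if i = b then (1:ℝ) else 0)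
          else if m + 1 ≤ (b : ℕ) ∧ (b : ℕ) ≤ (i : ℕ) then xs i - xs ((i : ℕ) - (m + 1)) else 0))
        = ffT m xs a b := by
      have step1 : (∑ i : Fin n, ffh m xs i (xs a) *
          (if (i : ℕ) < m + 1 then (if i = b then (1:ℝ) else 0)
            else if m + 1 ≤ (b : ℕ) ∧ (b : ℕ) ≤ (i : ℕ) then xs i - xs ((i : ℕ) - (m + 1)) else 0))
          = ∑ i : Fin n,
              (if (b : ℕ) ≤ (i : ℕ) then ffT m xs a i - ffT m xs a ((i : ℕ) + 1) else 0) := by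
        apply Finset.sum_congr rfl
        intro i _
        rcases lt_or_ge (i : ℕ) (m + 1) with hi | hi
        · have hne : i ≠ b := by
            intro h
            subst h
            omega
          rw [if_pos hi, if_neg hne, mul_zero, if_neg (by omega : ¬ (b:ℕ) ≤ (i:ℕ))]
        · rw [if_neg (by omega : ¬ (i:ℕ) < m + 1)]
          by_cases hbi : (b : ℕ) ≤ (i : ℕ)
          · rw [if_pos (⟨hb, hbi⟩ : m + 1 ≤ (b:ℕ) ∧ (b:ℕ) ≤ (i:ℕ)), if_pos hbi]
            exact ffT_key m xs hxs a i hi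
          · rw [if_neg (show ¬ (m + 1 ≤ (b:ℕ) ∧ (b:ℕ) ≤ (i:ℕ)) by tauto), mul_zero,
              if_neg hbi]
      rw [step1,
        Fin.sum_univ_eq_sum_range
          (fun i => if (b : ℕ) ≤ i then ffT m xs a i - ffT m xs a (i + 1) else 0) n]
      have hfilter : Finset.filter (fun i => (b : ℕ) ≤ i) (Finset.range n)
          = Finset.Ico (b : ℕ) n := by
        ext i
        simp only [Finset.mem_filter, Finset.mem_range, Finset.mem_Ico]
        tauto
      rw [← Finset.sum_filter, hfilter,
        Finset.sum_Ico_eq_sub _ (by omega : (b : ℕ) ≤ n),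
        Finset.sum_range_sub' (ffT m xs a) n, Finset.sum_range_sub' (ffT m xs a) (b : ℕ)]
      have hTn : ffT m xs a n = 0 := by
        unfold ffT
        rw [if_neg (by omega : ¬ n ≤ (a : ℕ)), mul_zero]
      rw [hTn]
      ring
    rw [hsum]
    unfold ffh ffT
    by_cases hbk : (b : ℕ) ≤ m + 1
    · have hbe : (b : ℕ) = m + 1 := by omega
      rw [if_pos hbk, hbe]
      by_cases ha : m + 1 ≤ (a : ℕ)
      · rw [if_pos ha, mul_one]
        apply Finset.prod_congr rfl
        intro ℓ _
        congr 2
        omega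
      · rw [if_neg ha, mul_zero]
        exact Finset.prod_eq_zero (Finset.mem_range.mpr (by omega : (a : ℕ) < m + 1))
          (by rw [sub_self])
    · rw [if_neg hbk]
      have hiff : xs ((b : ℕ) - 1) < xs (a : ℕ) ↔ (b : ℕ) ≤ (a : ℕ) := by
        rw [hxs.lt_iff_lt]
        omega
      simp only [hiff]
end

section
/- The falling factorial basis matrix H^(k) is invertible for every order k >= 0 and sorted inputs x_1 < ... < x_n, and its determinant equals ∏_{i=1}^{k} ∏_{j=1}^{n-i} (x_{i+j} - x_j). -/
/-- Diagonal entries of the falling factorial matrix, written uniformly as a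
product over gaps `g < min m k` of `xs m - xs (m - 1 - g)`. -/
lemma ffh_diag (k : ℕ) (xs : ℕ → ℝ) (hxs : StrictMono xs) (m : ℕ) :
    ffh k xs m (xs m) = ∏ g ∈ Finset.range (min m k), (xs m - xs (m - 1 - g)) := by
  unfold ffh
  by_cases h : m ≤ k
  · rw [if_pos h, Nat.min_eq_left h]
    rw [← Finset.prod_range_reflect]
  · rw [if_neg h, Nat.min_eq_right (le_of_not_ge h)]
    have h1 : xs (m - 1) < xs m := hxs (by omega)
    rw [if_pos h1, mul_one, ← Finset.prod_range_reflect]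
    apply Finset.prod_congr rfl
    intro g hg
    rw [Finset.mem_range] at hg
    congr 1
    congr 1
    omega

/-- The combinatorial product rearrangement. -/
lemma ff_prod_rearrange (k : ℕ) (xs : ℕ → ℝ) (n : ℕ) :
    ∏ m ∈ Finset.range n, ∏ g ∈ Finset.range (min m k), (xs m - xs (m - 1 - g))
      = ∏ i ∈ Finset.range k, ∏ j ∈ Finset.range (n - (i + 1)), (xs (i + 1 + j) - xs j) := by
  rw [Finset.prod_sigma', Finset.prod_sigma']
  refine Finset.prod_nbij' (fun p => ⟨p.2, p.1 - 1 - p.2⟩) (fun p => ⟨p.1 + 1 + p.2, p.1⟩)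
    ?_ ?_ ?_ ?_ ?_
  · intro p hp
    simp only [Finset.mem_sigma, Finset.mem_range, lt_min_iff] at hp ⊢
    omega
  · intro p hp
    simp only [Finset.mem_sigma, Finset.mem_range, lt_min_iff] at hp ⊢
    omega
  · intro p hp
    simp only [Finset.mem_sigma, Finset.mem_range, lt_min_iff] at hp
    ext <;> simp <;> omega
  · intro p hp
    simp only [Finset.mem_sigma, Finset.mem_range, lt_min_iff] at hp
    ext <;> simp <;> omega
  · intro p hp
    simp only [Finset.mem_sigma, Finset.mem_range, lt_min_iff] at hp
    have h1 : p.2 + 1 + (p.1 - 1 - p.2) = p.1 := by omega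
    simp [h1]

/-- The falling factorial basis matrix is invertible, with determinant
`∏_{i=1}^{k} ∏_{j=1}^{n-i} (x_{i+j} - x_j)` (stated here with 0-based indices). -/
theorem ffMatrix_isUnit_det (n k : ℕ) (hkn : k < n) (xs : ℕ → ℝ) (hxs : StrictMono xs) :
    IsUnit (ffMatrix n k xs) ∧
    (ffMatrix n k xs).det =
      ∏ i ∈ Finset.range k, ∏ j ∈ Finset.range (n - (i + 1)), (xs (i + 1 + j) - xs j) := by
  have htri : (ffMatrix n k xs).BlockTriangular OrderDual.toDual := by
    intro i j hij
    have hij' : (i : ℕ) < (j : ℕ) := hij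
    show ffh k xs j (xs i) = 0
    unfold ffh
    by_cases h : (j : ℕ) ≤ k
    · rw [if_pos h]
      refine Finset.prod_eq_zero (Finset.mem_range.2 hij') ?_
      simp
    · rw [if_neg h, if_neg, mul_zero]
      exact not_lt.2 (hxs.monotone (by omega))
  have hdet : (ffMatrix n k xs).det =
      ∏ i ∈ Finset.range k, ∏ j ∈ Finset.range (n - (i + 1)), (xs (i + 1 + j) - xs j) := by
    rw [Matrix.det_of_lowerTriangular _ htri, ← ff_prod_rearrange k xs n,
      ← Fin.prod_univ_eq_prod_range (fun m => ∏ g ∈ Finset.range (min m k),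
        (xs m - xs (m - 1 - g)))]
    exact Finset.prod_congr rfl fun i _ => ffh_diag k xs hxs i
  refine ⟨?_, hdet⟩
  rw [Matrix.isUnit_iff_isUnit_det, isUnit_iff_ne_zero, hdet]
  refine Finset.prod_ne_zero_iff.2 fun i _ => Finset.prod_ne_zero_iff.2 fun j _ => ?_
  have : xs j < xs (i + 1 + j) := hxs (by omega)
  linarith
end

section
/- Inverse representation via discrete differences: for order k >= 0 and sorted inputs x_1 < ... < x_n, the last n-k-1 rows of the inverse of the k-th order falling factorial basis matrix H^(k) equal (1/k!) · D^(k+1), where D^(k+1) is the (k+1)-st order discrete difference operator adjusted for the input spacings. -/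
/-- The discrete difference operators `D^(k)` over inputs `xs` (as entry functions,
row `i`, column `j`, both 0-based):  `D^(1)` has rows `(…, -1, 1, …)`, and
`D^(k+1) = D^(1) ⬝ k (Δ^(k))⁻¹ ⬝ D^(k)` with `Δ^(k) = diag(x_{k+1}-x_1, …)`. -/
noncomputable def Dop (xs : ℕ → ℝ) : ℕ → ℕ → ℕ → ℝ
  | 0 => fun i j => if j = i then 1 else 0
  | 1 => fun i j => if j = i then -1 else if j = i + 1 then 1 else 0
  | (k + 2) => fun i j =>
      ((k + 1 : ℕ) : ℝ) *
        (Dop xs (k + 1) (i + 1) j / (xs (k + 1 + (i + 1)) - xs (i + 1)) -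
         Dop xs (k + 1) i j / (xs (k + 1 + i) - xs i))

/-!
Indices are 0-based. The rows of `(H^(k))⁻¹` are divided differences. At the nodes `x_m` with
`m ≥ j - k` the basis function `h_j` agrees with the polynomial `∏_{j-k ≤ ℓ < j} (X - x_ℓ)` of
degree `min j k`, and it vanishes at the nodes `x_m` with `m < j`. A divided difference on `d + 1`
nodes reads off the coefficient of degree `d` of the interpolating polynomial, so the matrix whose
row `i ≤ k` is the divided difference on `x_0, …, x_i` and whose row `i > k` is `x_i - x_{i-k-1}`
times the divided difference on `x_{i-k-1}, …, x_i` is a left inverse of `H^(k)`. The recursion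
defining `D^(k+1)` is the divided-difference recursion, so row `r` of `D^(k+1)` is
`k! (x_{r+k+1} - x_r)` times the divided difference on `x_r, …, x_{r+k+1}`.
-/

open Finset Polynomial Lagrange

theorem coeff_nodal_of_card_le {R ι : Type*} [CommRing R] [Nontrivial R] {s : Finset ι}
    (v : ι → R) {i : ℕ} (h : #s ≤ i) : (nodal s v).coeff i = if i = #s then 1 else 0 := by
  split_ifs with hi
  · rw [hi, ← natDegree_nodal (v := v), nodal_monic.coeff_natDegree]
  · exact coeff_eq_zero_of_natDegree_lt (by rw [natDegree_nodal]; omega)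

section DivDiffWeight

variable {F ι : Type*} [Field F] [DecidableEq ι] {v : ι → F} {s : Finset ι}

noncomputable def divDiffWeight (v : ι → F) (s : Finset ι) (j : ι) : F :=
  if j ∈ s then nodalWeight s v j else 0

theorem sum_nodalWeight_mul_eval (hvs : Set.InjOn v s) {p : F[X]} (hp : p.degree < #s) :
    ∑ i ∈ s, nodalWeight s v i * p.eval (v i) = p.coeff (#s - 1) := by
  rw [coeff_eq_sum hvs hp]
  refine sum_congr rfl fun i _ => ?_
  rw [nodalWeight, prod_inv_distrib, div_eq_inv_mul]

theorem divDiffWeight_singleton (a j : ι) : divDiffWeight v {a} j = if j = a then 1 else 0 := by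
  by_cases h : j = a <;> simp [divDiffWeight, nodalWeight, h]

theorem divDiffWeight_erase (hvs : Set.InjOn v s) {a : ι} (ha : a ∈ s) (j : ι) :
    divDiffWeight v (s.erase a) j = (v j - v a) * divDiffWeight v s j := by
  by_cases hja : j = a
  · simp [divDiffWeight, hja]
  by_cases hj : j ∈ s
  · have hne : v j - v a ≠ 0 := sub_ne_zero.2 fun h => hja (hvs hj ha h)
    have hsplit : nodalWeight s v j = (v j - v a)⁻¹ * nodalWeight (s.erase a) v j := by
      rw [nodalWeight, nodalWeight, erase_right_comm,
        ← mul_prod_erase (s.erase j) _ (mem_erase.2 ⟨Ne.symm hja, ha⟩)]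
    rw [divDiffWeight, divDiffWeight, if_pos (mem_erase.2 ⟨hja, hj⟩), if_pos hj, hsplit,
      mul_inv_cancel_left₀ hne]
  · simp [divDiffWeight, hj]

theorem sub_mul_divDiffWeight (hvs : Set.InjOn v s) {a b : ι} (ha : a ∈ s) (hb : b ∈ s)
    (j : ι) : (v b - v a) * divDiffWeight v s j =
      divDiffWeight v (s.erase a) j - divDiffWeight v (s.erase b) j := by
  rw [divDiffWeight_erase hvs ha, divDiffWeight_erase hvs hb]
  ring

end DivDiffWeight

theorem sub_mul_divDiffWeight_Icc {F : Type*} [Field F] {xs : ℕ → F}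
    (hxs : Function.Injective xs) (r d j : ℕ) :
    (xs (r + (d + 1)) - xs r) * divDiffWeight xs (Icc r (r + (d + 1))) j =
      divDiffWeight xs (Icc (r + 1) (r + (d + 1))) j - divDiffWeight xs (Icc r (r + d)) j := by
  rw [sub_mul_divDiffWeight hxs.injOn (left_mem_Icc.2 (by omega)) (right_mem_Icc.2 (by omega)),
    Icc_erase_left, Icc_erase_right, Icc_add_one_left_eq_Ioc, ← add_assoc,
    Ico_add_one_right_eq_Icc]

theorem sum_divDiffWeight_mul_fin {F : Type*} [Field F] {n : ℕ} (v : ℕ → F) {s : Finset ℕ}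
    (hs : ∀ m ∈ s, m < n) (f : ℕ → F) :
    ∑ m : Fin n, divDiffWeight v s m * f m = ∑ m ∈ s, nodalWeight s v m * f m := by
  rw [Fin.sum_univ_eq_sum_range (fun m => divDiffWeight v s m * f m)]
  simp only [divDiffWeight, ite_mul, zero_mul]
  rw [sum_ite_mem, inter_eq_right.2 fun m hm => mem_range.2 (hs m hm)]

open Nat in
theorem Dop_succ_eq {xs : ℕ → ℝ} (hxs : Function.Injective xs) (d r j : ℕ) :
    Dop xs (d + 1) r j =
      d ! * ((xs (r + (d + 1)) - xs r) * divDiffWeight xs (Icc r (r + (d + 1))) j) := by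
  induction d generalizing r with
  | zero =>
    rw [sub_mul_divDiffWeight_Icc hxs, add_zero, Icc_self, Icc_self, divDiffWeight_singleton,
      divDiffWeight_singleton]
    by_cases h : j = r <;> simp [Dop, h]
  | succ d ih =>
    have hne (a b : ℕ) (h : a ≠ b) : xs a - xs b ≠ 0 := sub_ne_zero.2 (hxs.ne h)
    simp only [Dop]
    rw [ih, ih, sub_mul_divDiffWeight_Icc hxs r (d + 1) j, factorial_succ,
      show d + 1 + (r + 1) = r + 1 + (d + 1) by omega, show d + 1 + r = r + (d + 1) by omega,
      show r + 1 + (d + 1) = r + (d + 1 + 1) by omega]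
    field_simp [hne (r + (d + 1 + 1)) (r + 1) (by omega), hne (r + (d + 1)) r (by omega)]
    push_cast
    ring

section FallingFactorial

variable {xs : ℕ → ℝ} {k j m : ℕ}

-- For `j ≤ k` the truncated subtraction gives `Ico (j - k) j = range j`.
theorem ffh_of_le (hjk : j ≤ k) (x : ℝ) : ffh k xs j x = (nodal (Ico (j - k) j) xs).eval x := by
  rw [ffh, if_pos hjk, eval_nodal, Nat.sub_eq_zero_of_le hjk, range_eq_Ico]

theorem ffh_of_lt (hkj : k < j) (x : ℝ) :
    ffh k xs j x = (nodal (Ico (j - k) j) xs).eval x * if xs (j - 1) < x then 1 else 0 := by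
  rw [ffh, if_neg hkj.not_ge, eval_nodal, prod_Ico_eq_prod_range, Nat.sub_sub_self hkj.le]

variable (hxs : StrictMono xs)
include hxs

theorem ffh_node_eq_zero (hmj : m < j) : ffh k xs j (xs m) = 0 := by
  rcases le_or_gt j k with hjk | hkj
  · rw [ffh_of_le hjk, eval_nodal_at_node (mem_Ico.2 ⟨by omega, hmj⟩)]
  · rw [ffh_of_lt hkj, if_neg (hxs.monotone (by omega : m ≤ j - 1)).not_gt, mul_zero]

theorem ffh_node_eq_eval_nodal (hm : j - k ≤ m) :
    ffh k xs j (xs m) = (nodal (Ico (j - k) j) xs).eval (xs m) := by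
  rcases lt_or_ge m j with hmj | hjm
  · rw [ffh_node_eq_zero hxs hmj, eval_nodal_at_node (mem_Ico.2 ⟨hm, hmj⟩)]
  rcases le_or_gt j k with hjk | hkj
  · exact ffh_of_le hjk _
  · rw [ffh_of_lt hkj, if_pos (hxs (by omega : j - 1 < m)), mul_one]

end FallingFactorial

noncomputable def ffInv (n k : ℕ) (xs : ℕ → ℝ) : Matrix (Fin n) (Fin n) ℝ :=
  Matrix.of fun i j => if (i : ℕ) ≤ k then divDiffWeight xs (Icc 0 i) j
    else (xs i - xs (i - (k + 1))) * divDiffWeight xs (Icc (i - (k + 1)) i) j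

section LeftInverse

variable {xs : ℕ → ℝ} (hxs : StrictMono xs) {k : ℕ}
include hxs

theorem sum_nodalWeight_Icc_mul_ffh {a i j : ℕ} (hja : j - k ≤ a) (hdeg : a + min j k ≤ i) :
    ∑ m ∈ Icc a i, nodalWeight (Icc a i) xs m * ffh k xs j (xs m) =
      if i = a + min j k then 1 else 0 := by
  have hcard : #(Ico (j - k) j) = min j k := by rw [Nat.card_Ico]; omega
  have hnodes : ∀ m ∈ Icc a i, ffh k xs j (xs m) = (nodal (Ico (j - k) j) xs).eval (xs m) :=
    fun m hm => ffh_node_eq_eval_nodal hxs (hja.trans (mem_Icc.1 hm).1)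
  have hlt : (nodal (Ico (j - k) j) xs).degree < #(Icc a i) := by
    rw [degree_nodal, hcard, Nat.card_Icc]
    exact_mod_cast (by omega)
  rw [sum_congr rfl fun m hm => by rw [hnodes m hm],
    sum_nodalWeight_mul_eval hxs.injective.injOn hlt, Nat.card_Icc,
    coeff_nodal_of_card_le _ (by omega), hcard]
  congr 1
  simp only [eq_iff_iff]
  omega

theorem sum_mul_ffh_eq_zero_of_lt {a i j : ℕ} (hij : i < j) (c : ℕ → ℝ) :
    ∑ m ∈ Icc a i, c m * ffh k xs j (xs m) = 0 :=
  sum_eq_zero fun m hm => by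
    rw [ffh_node_eq_zero hxs ((mem_Icc.1 hm).2.trans_lt hij), mul_zero]

theorem sub_mul_sum_nodalWeight_Icc_mul_ffh_self {i : ℕ} (hki : k < i) :
    (xs i - xs (i - (k + 1))) * ∑ m ∈ Icc (i - (k + 1)) i,
      nodalWeight (Icc (i - (k + 1)) i) xs m * ffh k xs i (xs m) = 1 := by
  set a := i - (k + 1)
  have hP : (nodal (Ico (i - k) i) xs).eval (xs i) ≠ 0 :=
    eval_nodal_not_at_node fun m hm => (hxs (mem_Ico.1 hm).2).ne'
  have ha : xs i - xs a ≠ 0 := sub_ne_zero.2 (hxs (by omega)).ne'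
  rw [sum_eq_single_of_mem i (right_mem_Icc.2 (by omega)) fun m hm hmi => by
      rw [ffh_node_eq_zero hxs (lt_of_le_of_ne (mem_Icc.1 hm).2 hmi), mul_zero],
    ffh_node_eq_eval_nodal hxs (Nat.sub_le i k), nodalWeight_eq_eval_nodal_erase_inv,
    Icc_erase_right, ← insert_Ico_add_one_left_eq_Ico (by omega : a < i),
    nodal_insert_eq_nodal (by simp), show a + 1 = i - k by omega, eval_mul, eval_sub, eval_X,
    eval_C]
  field_simp

theorem sum_nodalWeight_Icc_zero_mul_ffh {i : ℕ} (hik : i ≤ k) (j : ℕ) :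
    ∑ m ∈ Icc 0 i, nodalWeight (Icc 0 i) xs m * ffh k xs j (xs m) =
      if i = j then 1 else 0 := by
  rcases le_or_gt j i with hji | hij
  · rw [sum_nodalWeight_Icc_mul_ffh hxs (by omega) (by omega), zero_add,
      min_eq_left (hji.trans hik)]
  · rw [sum_mul_ffh_eq_zero_of_lt hxs hij, if_neg hij.ne]

theorem sub_mul_sum_nodalWeight_Icc_mul_ffh {i : ℕ} (hki : k < i) (j : ℕ) :
    (xs i - xs (i - (k + 1))) * ∑ m ∈ Icc (i - (k + 1)) i,
      nodalWeight (Icc (i - (k + 1)) i) xs m * ffh k xs j (xs m) = if i = j then 1 else 0 := by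
  rcases lt_trichotomy j i with hji | rfl | hij
  · rw [sum_nodalWeight_Icc_mul_ffh hxs (by omega) (by omega), if_neg (by omega),
      if_neg hji.ne', mul_zero]
  · rw [sub_mul_sum_nodalWeight_Icc_mul_ffh_self hxs hki, if_pos rfl]
  · rw [sum_mul_ffh_eq_zero_of_lt hxs hij, mul_zero, if_neg hij.ne]

theorem ffInv_mul_ffMatrix (n : ℕ) : ffInv n k xs * ffMatrix n k xs = 1 := by
  ext i j
  have hnodes (a : ℕ) : ∀ m ∈ Icc a (i : ℕ), m < n :=
    fun m hm => (mem_Icc.1 hm).2.trans_lt i.2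
  simp only [Matrix.mul_apply, Matrix.one_apply, ffInv, ffMatrix, Matrix.of_apply, ← Fin.val_inj]
  by_cases hik : (i : ℕ) ≤ k
  · simp only [if_pos hik]
    rw [sum_divDiffWeight_mul_fin _ (hnodes 0) fun m => ffh k xs j (xs m)]
    exact sum_nodalWeight_Icc_zero_mul_ffh hxs hik j
  · simp only [if_neg hik, mul_assoc]
    rw [← mul_sum, sum_divDiffWeight_mul_fin _ (hnodes _) fun m => ffh k xs j (xs m)]
    exact sub_mul_sum_nodalWeight_Icc_mul_ffh hxs (not_le.1 hik) j

end LeftInverse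

theorem ffMatrix_inv_lower_rows_general (n k : ℕ) (xs : ℕ → ℝ)
    (hxs : StrictMono xs) (i j : Fin n) (hi : k + 1 ≤ (i : ℕ)) :
    (ffMatrix n k xs)⁻¹ i j =
      (1 / (Nat.factorial k : ℝ)) * Dop xs (k + 1) ((i : ℕ) - (k + 1)) (j : ℕ) := by
  rw [Matrix.inv_eq_left_inv (ffInv_mul_ffMatrix hxs n), Dop_succ_eq hxs.injective,
    Nat.sub_add_cancel hi, ffInv, Matrix.of_apply, if_neg (by omega), one_div,
    inv_mul_cancel_left₀ (by positivity)]

/-- Inverse representation: the last `n-k-1` rows of `(H^(k))⁻¹` are `(1/k!) D^(k+1)`. -/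
theorem ffMatrix_inv_lower_rows (n k : ℕ) (hkn : k + 1 < n) (xs : ℕ → ℝ)
    (hxs : StrictMono xs) (i j : Fin n) (hi : k + 1 ≤ (i : ℕ)) :
    (ffMatrix n k xs)⁻¹ i j =
      (1 / (Nat.factorial k : ℝ)) * Dop xs (k + 1) ((i : ℕ) - (k + 1)) (j : ℕ) :=
  ffMatrix_inv_lower_rows_general n k xs hxs i j hi
end

section
/- The inverse recursion for the falling factorial basis: for k >= 1, (H^(k))^{-1} = blockdiag(I_k, L_{n-k}^{-1} (Δ^(k))^{-1}) · (H^(k-1))^{-1}, where Δ^(k) = diag(x_{k+1}-x_1,...,x_n-x_{n-k}). -/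
set_option maxRecDepth 8000

lemma ffh_ge (k j i : ℕ) (xs : ℕ → ℝ) (hxs : StrictMono xs) (hk : 1 ≤ k) (hkj : k ≤ j) :
    ffh k xs j (xs i) =
      (if xs (j - 1) < xs i then 1 else 0) * ∏ ℓ ∈ Finset.range k, (xs i - xs (j - k + ℓ)) := by
  rcases eq_or_lt_of_le hkj with h | h
  · subst h
    simp only [ffh, le_refl, if_true, Nat.sub_self, Nat.zero_add]
    by_cases hi : xs (k - 1) < xs i
    · simp [hi]
    · have hik : i < k := by
        rw [hxs.lt_iff_lt] at hi; omega
      rw [if_neg hi, zero_mul]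
      exact Finset.prod_eq_zero (Finset.mem_range.mpr hik) (by ring)
  · have hj : ¬ j ≤ k := by omega
    simp only [ffh]; rw [if_neg hj]; ring

lemma ffh_gt (k j i : ℕ) (xs : ℕ → ℝ) (hkj : k < j) :
    ffh k xs j (xs i) =
      (if xs (j - 1) < xs i then 1 else 0) * ∏ ℓ ∈ Finset.range k, (xs i - xs (j - k + ℓ)) := by
  have hj : ¬ j ≤ k := by omega
  simp only [ffh]; rw [if_neg hj]; ring

lemma ffh_eval_zero (k j i : ℕ) (xs : ℕ → ℝ) (hxs : StrictMono xs) (hij : i < j) :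
    ffh k xs j (xs i) = 0 := by
  by_cases hjk : j ≤ k
  · simp only [ffh, if_pos hjk]
    exact Finset.prod_eq_zero (Finset.mem_range.mpr hij) (by ring)
  · simp only [ffh]; rw [if_neg hjk, if_neg, mul_zero]
    rw [hxs.lt_iff_lt]; omega

/-- The key scalar identity. -/
lemma ffh_sub (k j i : ℕ) (xs : ℕ → ℝ) (hxs : StrictMono xs) (hk : 1 ≤ k) (hkj : k ≤ j) :
    ffh k xs j (xs i) - ffh k xs (j + 1) (xs i)
      = (xs j - xs (j - k)) * ffh (k - 1) xs j (xs i) := by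
  rw [ffh_ge k j i xs hxs hk hkj, ffh_gt k (j+1) i xs (by omega),
    ffh_gt (k-1) j i xs (by omega)]
  have e1 : ∏ ℓ ∈ Finset.range k, (xs i - xs (j - k + ℓ))
      = (∏ ℓ ∈ Finset.range (k-1), (xs i - xs (j - (k-1) + ℓ))) * (xs i - xs (j - k)) := by
    conv_lhs => rw [show k = (k-1)+1 by omega, Finset.prod_range_succ']
    congr 1
    · exact Finset.prod_congr rfl fun ℓ _ => by congr 2; omega
    · congr 2; omega
  have e2 : ∏ ℓ ∈ Finset.range k, (xs i - xs (j + 1 - k + ℓ))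
      = (∏ ℓ ∈ Finset.range (k-1), (xs i - xs (j - (k-1) + ℓ))) * (xs i - xs j) := by
    conv_lhs => rw [show k = (k-1)+1 by omega, Finset.prod_range_succ]
    congr 1
    · exact Finset.prod_congr rfl fun ℓ _ => by congr 2; omega
    · congr 2; omega
  rw [e1, e2]
  rcases lt_trichotomy i j with h | h | h
  · have c1 : ¬ xs (j - 1) < xs i := by rw [hxs.lt_iff_lt]; omega
    have c2 : ¬ xs (j + 1 - 1) < xs i := by rw [hxs.lt_iff_lt]; omega
    rw [if_neg c1, if_neg c2]; ring
  · subst h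
    have c1 : xs (i - 1) < xs i := by apply hxs; omega
    have c2 : ¬ xs (i + 1 - 1) < xs i := by rw [hxs.lt_iff_lt]; omega
    rw [if_pos c1, if_neg c2]; ring
  · have c1 : xs (j - 1) < xs i := by apply hxs; omega
    have c2 : xs (j + 1 - 1) < xs i := by apply hxs; omega
    rw [if_pos c1, if_pos c2]; ring

lemma ffMatrix_det_isUnit (n k : ℕ) (xs : ℕ → ℝ) (hxs : StrictMono xs) :
    IsUnit (ffMatrix n k xs).det := by
  rw [Matrix.det_of_lowerTriangular]
  · rw [isUnit_iff_ne_zero, Finset.prod_ne_zero_iff]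
    intro i _
    show ffh k xs i (xs i) ≠ 0
    by_cases hik : (i : ℕ) ≤ k
    · simp only [ffh, if_pos hik]
      apply ne_of_gt
      apply Finset.prod_pos
      intro ℓ hℓ
      rw [Finset.mem_range] at hℓ
      have := hxs hℓ
      linarith
    · simp only [ffh]; rw [if_neg hik, if_pos (hxs (by omega))]
      rw [mul_one]
      apply ne_of_gt
      apply Finset.prod_pos
      intro ℓ hℓ
      rw [Finset.mem_range] at hℓ
      have : ((i:ℕ) - k + ℓ) < (i:ℕ) := by omega
      have := hxs this
      linarith
  · intro i j hij
    have hij' : (i : ℕ) < (j : ℕ) := hij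
    exact ffh_eval_zero k j i xs hxs hij'

/-- The inverse recursion: `(H^(k))⁻¹ = blockdiag(I_k, L_{n-k}⁻¹ (Δ^(k))⁻¹) ⬝ (H^(k-1))⁻¹`
for `k ≥ 1`.  The block matrix has identity on the first `k` coordinates; its lower
block `L_{n-k}⁻¹ (Δ^(k))⁻¹` has `1/(x_i - x_{i-k})` on the diagonal and
`-1/(x_j - x_{j-k})` on the subdiagonal (columns `j ≥ k`). -/
theorem ffMatrix_inv_recursion (n k : ℕ) (hk : 1 ≤ k) (hkn : k + 1 < n)
    (xs : ℕ → ℝ) (hxs : StrictMono xs) :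
    (ffMatrix n k xs)⁻¹ =
      Matrix.of (fun i j : Fin n =>
        if (i : ℕ) < k then (if i = j then (1 : ℝ) else 0)
        else if (j : ℕ) = (i : ℕ) then 1 / (xs (i : ℕ) - xs ((i : ℕ) - k))
        else if (j : ℕ) + 1 = (i : ℕ) ∧ k ≤ (j : ℕ) then -(1 / (xs (j : ℕ) - xs ((j : ℕ) - k)))
        else 0) * (ffMatrix n (k - 1) xs)⁻¹ := by
  have hA := ffMatrix_det_isUnit n k xs hxs
  have hC := ffMatrix_det_isUnit n (k-1) xs hxs
  set B : Matrix (Fin n) (Fin n) ℝ := Matrix.of (fun i j : Fin n =>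
        if (i : ℕ) < k then (if i = j then (1 : ℝ) else 0)
        else if (j : ℕ) = (i : ℕ) then 1 / (xs (i : ℕ) - xs ((i : ℕ) - k))
        else if (j : ℕ) + 1 = (i : ℕ) ∧ k ≤ (j : ℕ) then -(1 / (xs (j : ℕ) - xs ((j : ℕ) - k)))
        else 0) with hBdef
  have key : ffMatrix n k xs * B = ffMatrix n (k-1) xs := by
    ext i j
    rw [Matrix.mul_apply]
    by_cases hjk : (j : ℕ) < k
    · -- column j of B is the standard basis vector e_j
      have hB : ∀ m : Fin n, B m j = if m = j then 1 else 0 := by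
        intro m
        by_cases hm : (m : ℕ) < k
        · simp [hBdef, hm]
        · have h1 : ¬ ((j:ℕ) = (m:ℕ)) := by omega
          have h2 : ¬ ((j:ℕ) + 1 = (m:ℕ) ∧ k ≤ (j:ℕ)) := by omega
          have h3 : m ≠ j := by
            intro h; subst h; omega
          simp [hBdef, hm, h1, h2, h3]
      simp only [hB, mul_ite, mul_one, mul_zero, Finset.sum_ite_eq', Finset.mem_univ, if_true]
      show ffh k xs j (xs i) = ffh (k-1) xs j (xs i)
      simp only [ffh, if_pos (by omega : (j:ℕ) ≤ k), if_pos (by omega : (j:ℕ) ≤ k - 1)]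
    · have hkj : k ≤ (j : ℕ) := by omega
      have hd : xs (j:ℕ) - xs ((j:ℕ) - k) ≠ 0 := by
        have := hxs (show (j:ℕ) - k < (j:ℕ) by omega); linarith
      have hB : ∀ m : Fin n, B m j =
          (if m = j then 1/(xs (j:ℕ) - xs ((j:ℕ) - k)) else 0) + (if (m:ℕ) = (j:ℕ)+1 then -(1/(xs (j:ℕ) - xs ((j:ℕ) - k))) else 0) := by
        intro m
        rw [hBdef]
        simp only [Matrix.of_apply]
        by_cases hm1 : m = j
        · subst hm1
          have hne : ¬ ((m:ℕ) = (m:ℕ)+1) := by omega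
          rw [if_neg (not_lt.mpr hkj), if_pos rfl, if_pos rfl, if_neg hne, add_zero]
        · by_cases hm2 : (m:ℕ) = (j:ℕ)+1
          · have h0 : ¬ ((m:ℕ) < k) := by omega
            have h1 : ¬ ((j:ℕ) = (m:ℕ)) := by omega
            have h2 : (j:ℕ) + 1 = (m:ℕ) ∧ k ≤ (j:ℕ) := ⟨by omega, hkj⟩
            rw [if_neg h0, if_neg h1, if_pos h2, if_neg hm1, if_pos hm2, zero_add]
          · have h1 : ¬ ((j:ℕ) = (m:ℕ)) := fun h => hm1 (Fin.ext h.symm)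
            have h2 : ¬ ((j:ℕ) + 1 = (m:ℕ) ∧ k ≤ (j:ℕ)) := fun h => hm2 h.1.symm
            rw [if_neg hm1, if_neg hm2, add_zero]
            by_cases h0 : (m:ℕ) < k
            · rw [if_pos h0, if_neg hm1]
            · rw [if_neg h0, if_neg h1, if_neg h2, if_neg hm1]
      simp only [hB, mul_add, Finset.sum_add_distrib, mul_ite, mul_zero,
        Finset.sum_ite_eq', Finset.mem_univ, if_true]
      have hsub := ffh_sub k (j:ℕ) (i:ℕ) xs hxs hk hkj
      show ffh k xs j (xs i) * (1/(xs (j:ℕ) - xs ((j:ℕ) - k))) + _ = ffh (k-1) xs j (xs i)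
      by_cases hjn : (j:ℕ)+1 < n
      · have hsum : (∑ m : Fin n, if (m:ℕ) = (j:ℕ)+1 then
            ffMatrix n k xs i m * -(1/(xs (j:ℕ) - xs ((j:ℕ) - k))) else 0)
            = ffh k xs ((j:ℕ)+1) (xs i) * -(1/(xs (j:ℕ) - xs ((j:ℕ) - k))) := by
          rw [Finset.sum_eq_single (⟨(j:ℕ)+1, hjn⟩ : Fin n)]
          · simp [ffMatrix]
          · intro m _ hm
            rw [if_neg]
            intro h
            exact hm (Fin.ext h)
          · simp
        rw [hsum]
        field_simp
        linarith [hsub]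
      · have hz : ffh k xs ((j:ℕ)+1) (xs i) = 0 :=
          ffh_eval_zero k ((j:ℕ)+1) (i:ℕ) xs hxs (by omega)
        have hsum : (∑ m : Fin n, if (m:ℕ) = (j:ℕ)+1 then
            ffMatrix n k xs i m * -(1/(xs (j:ℕ) - xs ((j:ℕ) - k))) else 0) = 0 := by
          apply Finset.sum_eq_zero
          intro m _
          rw [if_neg]
          omega
        rw [hsum]
        rw [hz] at hsub
        field_simp
        linarith [hsub]
  calc (ffMatrix n k xs)⁻¹
      = (ffMatrix n k xs)⁻¹ * (ffMatrix n (k-1) xs * (ffMatrix n (k-1) xs)⁻¹) := by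
        rw [Matrix.mul_nonsing_inv _ hC, Matrix.mul_one]
    _ = (ffMatrix n k xs)⁻¹ * (ffMatrix n k xs * B * (ffMatrix n (k-1) xs)⁻¹) := by
        rw [key]
    _ = ((ffMatrix n k xs)⁻¹ * ffMatrix n k xs) * (B * (ffMatrix n (k-1) xs)⁻¹) := by
        simp only [Matrix.mul_assoc]
    _ = B * (ffMatrix n (k-1) xs)⁻¹ := by
        rw [Matrix.nonsing_inv_mul _ hA, Matrix.one_mul]
end

section
/- Elementwise proximity of the falling factorial and truncated power bases: let 0 <= x_1 < ... < x_n <= 1 with maximum gap δ = max_{i=1,...,n}(x_i - x_{i-1}) (with x_0 = 0). Then for every order k >= 0, max_{i,j} |G^(k)_{ij} - H^(k)_{ij}| <= k^2 δ. -/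
lemma prod_sub_prod_abs_le (m : ℕ) (f g : ℕ → ℝ)
    (hf : ∀ ℓ < m, |f ℓ| ≤ 1) (hg : ∀ ℓ < m, |g ℓ| ≤ 1) :
    |∏ ℓ ∈ Finset.range m, f ℓ - ∏ ℓ ∈ Finset.range m, g ℓ| ≤
      ∑ ℓ ∈ Finset.range m, |f ℓ - g ℓ| := by
  induction m with
  | zero => simp
  | succ m ih =>
    rw [Finset.prod_range_succ, Finset.prod_range_succ, Finset.sum_range_succ]
    have key : (∏ ℓ ∈ Finset.range m, f ℓ) * f m - (∏ ℓ ∈ Finset.range m, g ℓ) * g m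
        = (∏ ℓ ∈ Finset.range m, f ℓ) * (f m - g m)
          + (∏ ℓ ∈ Finset.range m, f ℓ - ∏ ℓ ∈ Finset.range m, g ℓ) * g m := by ring
    rw [key]
    have hPf : |∏ ℓ ∈ Finset.range m, f ℓ| ≤ 1 := by
      rw [Finset.abs_prod]
      exact Finset.prod_le_one (fun ℓ _ => abs_nonneg _)
        (fun ℓ hℓ => hf ℓ (Nat.lt_succ_of_lt (Finset.mem_range.mp hℓ)))
    have h1 : |(∏ ℓ ∈ Finset.range m, f ℓ) * (f m - g m)| ≤ |f m - g m| := by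
      rw [abs_mul]
      calc |∏ ℓ ∈ Finset.range m, f ℓ| * |f m - g m| ≤ 1 * |f m - g m| :=
            mul_le_mul_of_nonneg_right hPf (abs_nonneg _)
        _ = |f m - g m| := one_mul _
    have h2 : |(∏ ℓ ∈ Finset.range m, f ℓ - ∏ ℓ ∈ Finset.range m, g ℓ) * g m|
        ≤ ∑ ℓ ∈ Finset.range m, |f ℓ - g ℓ| := by
      rw [abs_mul]
      calc |∏ ℓ ∈ Finset.range m, f ℓ - ∏ ℓ ∈ Finset.range m, g ℓ| * |g m|
          ≤ (∑ ℓ ∈ Finset.range m, |f ℓ - g ℓ|) * 1 := by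
            apply mul_le_mul
            · exact ih (fun ℓ hℓ => hf ℓ (Nat.lt_succ_of_lt hℓ))
                (fun ℓ hℓ => hg ℓ (Nat.lt_succ_of_lt hℓ))
            · exact hg m (Nat.lt_succ_self m)
            · exact abs_nonneg _
            · exact Finset.sum_nonneg fun _ _ => abs_nonneg _
        _ = ∑ ℓ ∈ Finset.range m, |f ℓ - g ℓ| := mul_one _
    calc |_ + _| ≤ _ + _ := abs_add_le _ _
      _ ≤ |f m - g m| + ∑ ℓ ∈ Finset.range m, |f ℓ - g ℓ| := add_le_add h1 h2
      _ = ∑ ℓ ∈ Finset.range m, |f ℓ - g ℓ| + |f m - g m| := add_comm _ _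

lemma chain_gap (n : ℕ) (xs : ℕ → ℝ) (δ : ℝ)
    (hδ : ∀ i, i + 1 < n → xs (i + 1) - xs i ≤ δ) :
    ∀ a b, a ≤ b → b < n → xs b - xs a ≤ ((b - a : ℕ) : ℝ) * δ := by
  intro a b hab
  induction b, hab using Nat.le_induction with
  | base => intro _; simp
  | succ b hab ih =>
    intro hbn
    have h1 := hδ b hbn
    have h2 := ih (Nat.lt_of_succ_lt hbn)
    have hc : ((b + 1 - a : ℕ) : ℝ) = ((b - a : ℕ) : ℝ) + 1 := by
      have : b + 1 - a = (b - a) + 1 := by omega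
      rw [this]; push_cast; ring
    rw [hc]
    nlinarith



/-- The truncated power basis matrix `G^(k)` over inputs `xs`, with knots
`t_j = x_{j - ⌈k/2⌉}` (0-based; `⌈k/2⌉ = (k+1)/2` in natural division). -/
noncomputable def tpMatrix (n k : ℕ) (xs : ℕ → ℝ) : Matrix (Fin n) (Fin n) ℝ :=
  Matrix.of fun i j =>
    if (j : ℕ) ≤ k then (xs i) ^ (j : ℕ)
    else (xs i - xs ((j : ℕ) - (k + 1) / 2)) ^ k *
      (if xs ((j : ℕ) - (k + 1) / 2) ≤ xs i then 1 else 0)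

/-- Elementwise proximity of the truncated power and falling factorial bases:
if the inputs lie in `[0,1]` with maximum gap `δ` (including the gap from `0`),
and `kδ ≤ 1`, then every entry of `G^(k) - H^(k)` is at most `k²δ` in absolute value. -/
theorem tp_ff_entrywise_close (n k : ℕ) (xs : ℕ → ℝ) (δ : ℝ)
    (hxs : StrictMono xs)
    (hbound : ∀ i < n, 0 ≤ xs i ∧ xs i ≤ 1)
    (hδ0 : 0 < n → xs 0 ≤ δ)
    (hδ : ∀ i, i + 1 < n → xs (i + 1) - xs i ≤ δ)
    (hkδ : (k : ℝ) * δ ≤ 1)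
    (i j : Fin n) :
    |tpMatrix n k xs i j - ffMatrix n k xs i j| ≤ (k : ℝ) ^ 2 * δ := by
  have hn : 0 < n := i.pos
  have hδnn : 0 ≤ δ := le_trans (hbound 0 hn).1 (hδ0 hn)
  have hx0 : 0 ≤ xs i := (hbound i i.2).1
  have hx1 : xs i ≤ 1 := (hbound i i.2).2
  have hchain := chain_gap n xs δ hδ
  have hub : ∀ ℓ, ℓ < n → xs ℓ ≤ ((ℓ + 1 : ℕ) : ℝ) * δ := by
    intro ℓ hℓ
    have h1 := hchain 0 ℓ (Nat.zero_le _) hℓ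
    have h2 := hδ0 hn
    have : ((ℓ + 1 : ℕ) : ℝ) = ((ℓ - 0 : ℕ) : ℝ) + 1 := by
      simp
    rw [this]
    nlinarith
  simp only [tpMatrix, ffMatrix, ffh, Matrix.of_apply]
  by_cases hjk : (j : ℕ) ≤ k
  · rw [if_pos hjk, if_pos hjk]
    have hpow : xs i ^ (j : ℕ) = ∏ ℓ ∈ Finset.range (j : ℕ), xs i := by
      rw [Finset.prod_const, Finset.card_range]
    rw [hpow]
    have hf : ∀ ℓ < (j : ℕ), |xs i| ≤ 1 := fun ℓ _ => abs_le.mpr ⟨by linarith, hx1⟩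
    have hg : ∀ ℓ < (j : ℕ), |xs i - xs ℓ| ≤ 1 := by
      intro ℓ hℓ
      have hℓn : ℓ < n := lt_trans hℓ j.2
      have := hbound ℓ hℓn
      exact abs_le.mpr ⟨by linarith [this.2], by linarith [this.1]⟩
    calc |(∏ ℓ ∈ Finset.range (j:ℕ), xs i) - ∏ ℓ ∈ Finset.range (j:ℕ), (xs i - xs ℓ)|
        ≤ ∑ ℓ ∈ Finset.range (j:ℕ), |xs i - (xs i - xs ℓ)| :=
          prod_sub_prod_abs_le (j:ℕ) (fun _ => xs i) (fun ℓ => xs i - xs ℓ) hf hg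
      _ ≤ ∑ ℓ ∈ Finset.range (j:ℕ), (k : ℝ) * δ := by
          apply Finset.sum_le_sum
          intro ℓ hℓ
          rw [Finset.mem_range] at hℓ
          have hℓn : ℓ < n := lt_trans hℓ j.2
          have h1 : |xs i - (xs i - xs ℓ)| = xs ℓ := by
            rw [show xs i - (xs i - xs ℓ) = xs ℓ by ring]
            exact abs_of_nonneg (hbound ℓ hℓn).1
          rw [h1]
          calc xs ℓ ≤ ((ℓ + 1 : ℕ) : ℝ) * δ := hub ℓ hℓn
            _ ≤ (k : ℝ) * δ := by
                apply mul_le_mul_of_nonneg_right _ hδnn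
                exact_mod_cast Nat.le_trans (by omega : ℓ + 1 ≤ (j:ℕ)) hjk
      _ = ((j : ℕ) : ℝ) * ((k : ℝ) * δ) := by
          rw [Finset.sum_const, Finset.card_range, nsmul_eq_mul]
      _ ≤ (k : ℝ) * ((k : ℝ) * δ) := by
          apply mul_le_mul_of_nonneg_right _ (by positivity)
          exact_mod_cast hjk
      _ = (k : ℝ) ^ 2 * δ := by ring
  · rw [if_neg hjk, if_neg hjk]
    have hkj : k < (j : ℕ) := Nat.lt_of_not_le hjk
    set m := (j : ℕ) - (k + 1) / 2 with hm
    rcases Nat.eq_zero_or_pos k with hk0 | hk1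
    · subst hk0
      have hmj : m = (j : ℕ) := by omega
      rw [hmj]
      have heq : (xs (j:ℕ) ≤ xs i) ↔ (xs ((j:ℕ) - 1) < xs i) := by
        rw [hxs.le_iff_le, hxs.lt_iff_lt]; omega
      rw [if_congr heq rfl rfl]
      simp
    · have hmub : m ≤ (j : ℕ) - 1 := by omega
      have hmlb : (j : ℕ) - k ≤ m := by omega
      have hmlt : m < (j : ℕ) := by omega
      have hmn : m < n := lt_trans hmlt j.2
      by_cases hij : (j : ℕ) ≤ (i : ℕ)
      · have hi1 : xs m ≤ xs i := hxs.le_iff_le.mpr (by omega)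
        have hi2 : xs ((j:ℕ) - 1) < xs i := hxs.lt_iff_lt.mpr (by omega)
        rw [if_pos hi1, if_pos hi2, mul_one, mul_one]
        have hpow : (xs i - xs m) ^ k = ∏ ℓ ∈ Finset.range k, (xs i - xs m) := by
          rw [Finset.prod_const, Finset.card_range]
        rw [hpow]
        have hidx : ∀ ℓ < k, (j:ℕ) - k + ℓ < n := by
          intro ℓ hℓ; have : (j:ℕ) - k + ℓ < (j:ℕ) := by omega
          exact lt_trans this j.2
        have hf : ∀ ℓ < k, |xs i - xs m| ≤ 1 := by
          intro ℓ _
          have := hbound m hmn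
          exact abs_le.mpr ⟨by linarith [this.2], by linarith [this.1]⟩
        have hg : ∀ ℓ < k, |xs i - xs ((j:ℕ) - k + ℓ)| ≤ 1 := by
          intro ℓ hℓ
          have := hbound _ (hidx ℓ hℓ)
          exact abs_le.mpr ⟨by linarith [this.2], by linarith [this.1]⟩
        calc |(∏ ℓ ∈ Finset.range k, (xs i - xs m)) -
              ∏ ℓ ∈ Finset.range k, (xs i - xs ((j:ℕ) - k + ℓ))|
            ≤ ∑ ℓ ∈ Finset.range k, |(xs i - xs m) - (xs i - xs ((j:ℕ) - k + ℓ))| :=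
              prod_sub_prod_abs_le k _ _ hf hg
          _ ≤ ∑ ℓ ∈ Finset.range k, (k : ℝ) * δ := by
              apply Finset.sum_le_sum
              intro ℓ hℓ
              rw [Finset.mem_range] at hℓ
              have hsimp : (xs i - xs m) - (xs i - xs ((j:ℕ) - k + ℓ))
                  = xs ((j:ℕ) - k + ℓ) - xs m := by ring
              rw [hsimp]
              set a := (j:ℕ) - k + ℓ with ha
              have han : a < n := hidx ℓ hℓ
              rcases le_total a m with hcase | hcase
              · have h1 := hchain a m hcase hmn
                have h2 : xs a ≤ xs m := hxs.monotone hcase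
                rw [abs_of_nonpos (by linarith), neg_sub]
                have : ((m - a : ℕ) : ℝ) ≤ (k : ℝ) := by
                  exact_mod_cast (by omega : m - a ≤ k)
                nlinarith
              · have h1 := hchain m a hcase han
                have h2 : xs m ≤ xs a := hxs.monotone hcase
                rw [abs_of_nonneg (by linarith)]
                have : ((a - m : ℕ) : ℝ) ≤ (k : ℝ) := by
                  exact_mod_cast (by omega : a - m ≤ k)
                nlinarith
          _ = (k : ℝ) * ((k : ℝ) * δ) := by
              rw [Finset.sum_const, Finset.card_range, nsmul_eq_mul]
          _ = (k : ℝ) ^ 2 * δ := by ring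
      · have hij' : (i : ℕ) < (j : ℕ) := Nat.lt_of_not_le hij
        have hi2 : ¬ xs ((j:ℕ) - 1) < xs i := by
          rw [hxs.lt_iff_lt]; omega
        rw [if_neg hi2, mul_zero, sub_zero]
        by_cases him : (i : ℕ) < m
        · have hi1 : ¬ xs m ≤ xs i := by rw [hxs.le_iff_le]; omega
          rw [if_neg hi1, mul_zero]
          simp only [abs_zero]
          positivity
        · have him' : m ≤ (i : ℕ) := Nat.le_of_not_lt him
          have hi1 : xs m ≤ xs i := hxs.monotone him'
          rw [if_pos hi1, mul_one]
          have h1 : 0 ≤ xs i - xs m := by linarith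
          have h2 : xs i - xs m ≤ ((i : ℕ) - m : ℕ) * δ := hchain m i him' i.2
          have h3 : (((i : ℕ) - m : ℕ) : ℝ) ≤ (k : ℝ) := by
            exact_mod_cast (by omega : (i : ℕ) - m ≤ k)
          have h4 : xs i - xs m ≤ (k : ℝ) * δ := by nlinarith
          have h5 : xs i - xs m ≤ 1 := le_trans h4 hkδ
          have h6 : (xs i - xs m) ^ k ≤ (xs i - xs m) ^ 1 :=
            pow_le_pow_of_le_one h1 h5 hk1
          rw [abs_of_nonneg (pow_nonneg h1 k)]
          have hk1' : (1 : ℝ) ≤ (k : ℝ) := by exact_mod_cast hk1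
          calc (xs i - xs m) ^ k ≤ (xs i - xs m) ^ 1 := h6
            _ = xs i - xs m := pow_one _
            _ ≤ (k : ℝ) * δ := h4
            _ ≤ (k : ℝ) ^ 2 * δ := by nlinarith
end

section
/- Polynomial product versus power bound: if 0 <= x_ℓ <= kδ for ℓ = 1,...,j-1 with j-1 <= k, and 0 <= x <= 1, then |∏_{ℓ=1}^{j-1}(x - x_ℓ) - x^{j-1}| <= k^2 δ, provided x >= x_{j-1}. -/
lemma prod_vs_pow_aux (δ : ℝ) (hδ : 0 < δ) (k : ℕ) (hkδ : (k : ℝ) * δ ≤ 1)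
    (c : ℕ → ℝ) (x : ℝ) (hx0 : 0 ≤ x) (hx1 : x ≤ 1) (m : ℕ)
    (hc0 : ∀ ℓ < m, 0 ≤ c ℓ) (hcb : ∀ ℓ < m, c ℓ ≤ (k : ℝ) * δ)
    (hcx : ∀ ℓ < m, c ℓ ≤ x) :
    |(∏ ℓ ∈ Finset.range m, (x - c ℓ)) - x ^ m| ≤ (m : ℝ) * ((k : ℝ) * δ) := by
  induction m with
  | zero => simp
  | succ n ih =>
    have h0 : ∀ ℓ < n, 0 ≤ c ℓ := fun ℓ h => hc0 ℓ (h.trans n.lt_succ_self)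
    have hb : ∀ ℓ < n, c ℓ ≤ (k : ℝ) * δ := fun ℓ h => hcb ℓ (h.trans n.lt_succ_self)
    have hxle : ∀ ℓ < n, c ℓ ≤ x := fun ℓ h => hcx ℓ (h.trans n.lt_succ_self)
    have ihh := ih h0 hb hxle
    rw [Finset.prod_range_succ]
    have key : (∏ ℓ ∈ Finset.range n, (x - c ℓ)) * (x - c n) - x ^ (n + 1)
        = ((∏ ℓ ∈ Finset.range n, (x - c ℓ)) - x ^ n) * (x - c n) - x ^ n * c n := by
      ring
    rw [key]
    have hcn0 : 0 ≤ c n := hc0 n n.lt_succ_self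
    have hcnx : c n ≤ x := hcx n n.lt_succ_self
    have hcnb : c n ≤ (k : ℝ) * δ := hcb n n.lt_succ_self
    have h1 : |((∏ ℓ ∈ Finset.range n, (x - c ℓ)) - x ^ n) * (x - c n)|
        ≤ (n : ℝ) * ((k : ℝ) * δ) := by
      rw [abs_mul]
      calc |(∏ ℓ ∈ Finset.range n, (x - c ℓ)) - x ^ n| * |x - c n|
          ≤ ((n : ℝ) * ((k : ℝ) * δ)) * 1 := by
            apply mul_le_mul ihh _ (abs_nonneg _) (by positivity)
            rw [abs_of_nonneg (by linarith)]; linarith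
        _ = (n : ℝ) * ((k : ℝ) * δ) := by ring
    have h2 : |x ^ n * c n| ≤ (k : ℝ) * δ := by
      rw [abs_of_nonneg (by positivity)]
      calc x ^ n * c n ≤ 1 * ((k : ℝ) * δ) := by
            apply mul_le_mul _ hcnb hcn0 zero_le_one
            exact pow_le_one₀ hx0 hx1
        _ = (k : ℝ) * δ := one_mul _
    calc |_ - _| ≤ |((∏ ℓ ∈ Finset.range n, (x - c ℓ)) - x ^ n) * (x - c n)| + |x ^ n * c n| :=
          abs_sub _ _
      _ ≤ (n : ℝ) * ((k : ℝ) * δ) + (k : ℝ) * δ := add_le_add h1 h2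
      _ = ((n + 1 : ℕ) : ℝ) * ((k : ℝ) * δ) := by push_cast; ring

/-- Polynomial product versus power bound: if `0 ≤ c_ℓ ≤ kδ` for `ℓ < m` with `m ≤ k`,
`kδ ≤ 1`, and `x ∈ [0,1]` is at least every `c_ℓ`, then
`|∏_{ℓ<m}(x - c_ℓ) - x^m| ≤ k²δ`. -/
theorem prod_vs_pow_bound (k m : ℕ) (hk : 1 ≤ k) (hm : m ≤ k) (δ : ℝ) (hδ : 0 < δ)
    (hkδ : (k : ℝ) * δ ≤ 1) (c : ℕ → ℝ)
    (hc0 : ∀ ℓ < m, 0 ≤ c ℓ) (hcb : ∀ ℓ < m, c ℓ ≤ (k : ℝ) * δ)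
    (x : ℝ) (hx0 : 0 ≤ x) (hx1 : x ≤ 1) (hcx : ∀ ℓ < m, c ℓ ≤ x) :
    |(∏ ℓ ∈ Finset.range m, (x - c ℓ)) - x ^ m| ≤ (k : ℝ) ^ 2 * δ := by
  have := prod_vs_pow_aux δ hδ k hkδ c x hx0 hx1 m hc0 hcb hcx
  have hmk : (m : ℝ) ≤ (k : ℝ) := Nat.cast_le.mpr hm
  nlinarith [mul_nonneg (mul_nonneg (sub_nonneg.mpr hmk) (Nat.cast_nonneg (α := ℝ) k)) hδ.le]
end

section
/- Total variation sparsity of the falling factorial expansion: let h_1,...,h_n be the k-th order falling factorial functions over knots z_1 < ... < z_r (with n = r + k + 1 appropriately indexed), and let f = ∑_{j=1}^n α_j h_j. Then the total variation of the k-th derivative of f equals ∑_{j=k+2}^n |α_j|. -/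
/-! Off the knots, every basis function agrees near the point with a polynomial of degree at most
`k`, whose coefficient of `X ^ k` is `1` for `h_k` and for the truncated functions already switched
on, and `0` otherwise; so the `k`-th derivative of `f` is `k!` times a right-continuous step
function with jump `α_j` at the knot of `h_j`. Increment by increment such a step function is
dominated by the monotone step function with jumps `|α_j|`, which bounds its variation by
`∑ |α_j|`; since the knots are strictly increasing, the partition made of one point left of all
knots followed by the knots sees every jump separately and attains the bound. -/

open Finset Filter Topology Polynomial
open scoped Nat

namespace Polynomial

protected theorem iteratedDeriv {𝕜 : Type*} [NontriviallyNormedField 𝕜] (p : 𝕜[X]) (k : ℕ) :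
    iteratedDeriv k (fun x => p.eval x) = fun x => (derivative^[k] p).eval x := by
  induction k generalizing p with
  | zero => rfl
  | succ k ih =>
    have hderiv : deriv (fun x => p.eval x) = fun x => (derivative p).eval x :=
      _root_.funext fun _ => p.deriv
    rw [iteratedDeriv_succ', hderiv, ih, Function.iterate_succ_apply]

theorem iterate_derivative_of_natDegree_le {R : Type*} [Semiring R] {p : R[X]} {k : ℕ}
    (hp : p.natDegree ≤ k) : derivative^[k] p = C (k ! * p.coeff k) := by
  have hconst : (derivative^[k] p).natDegree = 0 := by
    have := p.natDegree_iterate_derivative k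
    omega
  rw [eq_C_of_natDegree_eq_zero hconst, coeff_iterate_derivative]
  simp [Nat.descFactorial_self]

theorem coeff_prod_X_sub_C_of_card_le {R ι : Type*} [CommRing R] [Nontrivial R] {s : Finset ι}
    (c : ι → R) {k : ℕ} (hk : #s ≤ k) :
    (∏ i ∈ s, (X - C (c i))).coeff k = if #s = k then 1 else 0 := by
  split_ifs with hs
  · rw [← hs, ← natDegree_finsetProd_X_sub_C_eq_card s c]
    exact (monic_prod_X_sub_C c s).coeff_natDegree
  · exact coeff_eq_zero_of_natDegree_lt <| by
      rw [natDegree_finsetProd_X_sub_C_eq_card]; omega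

end Polynomial

theorem iteratedDeriv_eq_factorial_mul_coeff {𝕜 : Type*} [NontriviallyNormedField 𝕜] {f : 𝕜 → 𝕜}
    {p : 𝕜[X]} {k : ℕ} {x : 𝕜}
    (hf : f =ᶠ[𝓝 x] fun t => p.eval t) (hp : p.natDegree ≤ k) :
    iteratedDeriv k f x = k ! * p.coeff k := by
  rw [hf.iteratedDeriv_eq, Polynomial.iteratedDeriv, iterate_derivative_of_natDegree_le hp]
  exact eval_C

section FallingFactorial

variable {k : ℕ} {z : ℕ → ℝ} {x : ℝ} {j : ℕ}

noncomputable def ffhLocalPoly (k : ℕ) (z : ℕ → ℝ) (x : ℝ) (j : ℕ) : ℝ[X] :=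
  if j ≤ k then ∏ ℓ ∈ range j, (X - C (z ℓ))
  else if z (j - 1) ≤ x then ∏ ℓ ∈ range k, (X - C (z (j - k + ℓ))) else 0

theorem ffh_eventuallyEq_ffhLocalPoly (hx : k < j → x ≠ z (j - 1)) :
    ffh k z j =ᶠ[𝓝 x] fun t => (ffhLocalPoly k z x j).eval t := by
  by_cases hj : j ≤ k
  · exact Eventually.of_forall fun t => by simp [ffh, ffhLocalPoly, hj, eval_prod]
  rcases (hx (by omega)).lt_or_gt with hlt | hgt
  · filter_upwards [eventually_lt_nhds hlt] with t ht
    simp [ffh, ffhLocalPoly, hj, ht.not_gt, hlt.not_ge]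
  · filter_upwards [eventually_gt_nhds hgt] with t ht
    simp [ffh, ffhLocalPoly, hj, ht, hgt.le, eval_prod]

theorem natDegree_ffhLocalPoly_le : (ffhLocalPoly k z x j).natDegree ≤ k := by
  unfold ffhLocalPoly
  split_ifs with hj <;> simp [hj]

theorem coeff_ffhLocalPoly :
    (ffhLocalPoly k z x j).coeff k =
      if j < k then 0 else if j = k then 1 else if z (j - 1) ≤ x then 1 else 0 := by
  unfold ffhLocalPoly
  rcases lt_trichotomy j k with hjk | rfl | hkj
  · simp [hjk, hjk.le, coeff_prod_X_sub_C_of_card_le, hjk.ne]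
  · simp [coeff_prod_X_sub_C_of_card_le]
  · simp only [hkj.not_ge, hkj.not_gt, hkj.ne', if_false]
    split_ifs <;> simp [coeff_prod_X_sub_C_of_card_le]

theorem iteratedDeriv_sum_mul_ffh {n : ℕ} (hkn : k + 1 ≤ n) (a : ℕ → ℝ)
    (hx : ∀ j < n, x ≠ z j) :
    iteratedDeriv k (fun t => ∑ j ∈ range n, a j * ffh k z j t) x =
      k ! * (a k + ∑ j ∈ Ico (k + 1) n, a j * if z (j - 1) ≤ x then 1 else 0) := by
  set P := ∑ j ∈ range n, C (a j) * ffhLocalPoly k z x j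
  have hlocal : (fun t => ∑ j ∈ range n, a j * ffh k z j t) =ᶠ[𝓝 x] fun t => P.eval t := by
    have := (eventually_all_finset (range n)).2 fun j hj =>
      ffh_eventuallyEq_ffhLocalPoly (k := k) (z := z) fun _ => hx (j - 1) (by simp at hj; omega)
    filter_upwards [this] with t ht
    simp only [P, eval_finsetSum, eval_mul, eval_C]
    exact sum_congr rfl fun j hj => by rw [ht j hj]
  have hdeg : P.natDegree ≤ k := natDegree_sum_le_of_forall_le _ _ fun j _ =>
    (natDegree_C_mul_le _ _).trans natDegree_ffhLocalPoly_le
  rw [iteratedDeriv_eq_factorial_mul_coeff hlocal hdeg, finsetSum_coeff]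
  simp only [coeff_C_mul, coeff_ffhLocalPoly]
  rw [← sum_range_add_sum_Ico _ hkn, sum_range_succ,
    sum_eq_zero fun j hj => by simp [mem_range.1 hj]]
  congr 2
  · simp
  · exact sum_congr rfl fun j hj => by
      simp only [mem_Ico] at hj; simp [show ¬ j < k by omega, show j ≠ k by omega]

end FallingFactorial

theorem eVariationOn_le_of_edist_le {α E F : Type*} [LinearOrder α] [PseudoEMetricSpace E]
    [PseudoEMetricSpace F] {f : α → E} {g : α → F} {s : Set α}
    (h : ∀ x ∈ s, ∀ y ∈ s, x ≤ y → edist (f y) (f x) ≤ edist (g y) (g x)) :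
    eVariationOn f s ≤ eVariationOn g s := by
  refine iSup_le fun ⟨N, u, hu, us⟩ => ?_
  exact (sum_le_sum fun i _ => h _ (us i) _ (us (i + 1)) (hu i.le_succ)).trans
    (eVariationOn.sum_le hu us)

theorem Monotone.eVariationOn_univ_le {α : Type*} [LinearOrder α] {f : α → ℝ} (hf : Monotone f)
    {M : ℝ} (hM : ∀ x y, f y - f x ≤ M) : eVariationOn f Set.univ ≤ ENNReal.ofReal M := by
  rw [eVariationOn.eq_biSup_inter_Icc]
  refine iSup₂_le fun p _ => ?_
  rw [(hf.monotoneOn Set.univ).eVariationOn_eq (Set.mem_univ _) (Set.mem_univ _)]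
  exact ENNReal.ofReal_le_ofReal (hM _ _)

noncomputable def stepFunction (c : ℝ) (b t : ℕ → ℝ) (m : ℕ) (x : ℝ) : ℝ :=
  c + ∑ i ∈ range m, b i * if t i ≤ x then 1 else 0

section StepFunction

variable {c : ℝ} {b t : ℕ → ℝ} {m : ℕ}

theorem stepFunction_sub (x y : ℝ) :
    stepFunction c b t m y - stepFunction c b t m x =
      ∑ i ∈ range m, b i * ((if t i ≤ y then 1 else 0) - if t i ≤ x then 1 else 0) := by
  simp only [stepFunction, mul_sub, sum_sub_distrib]
  ring

theorem ite_le_sub_ite_le_nonneg {t x y : ℝ} (hxy : x ≤ y) :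
    0 ≤ (if t ≤ y then (1 : ℝ) else 0) - if t ≤ x then 1 else 0 := by
  split_ifs with hy hx hx <;> first | exact absurd (hx.trans hxy) hy | norm_num

theorem stepFunction_monotone (hb : ∀ i, 0 ≤ b i) : Monotone (stepFunction c b t m) := by
  intro x y hxy
  rw [← sub_nonneg, stepFunction_sub]
  exact sum_nonneg fun i _ => mul_nonneg (hb i) (ite_le_sub_ite_le_nonneg hxy)

theorem stepFunction_sub_le_sum (x y : ℝ) (hb : ∀ i, 0 ≤ b i) :
    stepFunction c b t m y - stepFunction c b t m x ≤ ∑ i ∈ range m, b i := by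
  rw [stepFunction_sub]
  exact sum_le_sum fun i _ => mul_le_of_le_one_right (hb i) (by split_ifs <;> norm_num)

theorem abs_stepFunction_sub_le {x y : ℝ} (hxy : x ≤ y) :
    |stepFunction c b t m y - stepFunction c b t m x| ≤
      stepFunction 0 (|b ·|) t m y - stepFunction 0 (|b ·|) t m x := by
  rw [stepFunction_sub, stepFunction_sub]
  refine (abs_sum_le_sum_abs _ _).trans (sum_le_sum fun i _ => ?_)
  rw [abs_mul, abs_of_nonneg (ite_le_sub_ite_le_nonneg hxy)]

theorem eVariationOn_stepFunction_le :
    eVariationOn (stepFunction c b t m) Set.univ ≤ ENNReal.ofReal (∑ i ∈ range m, |b i|) := by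
  let V := stepFunction 0 (|b ·|) t m
  have hdom : ∀ x ∈ Set.univ, ∀ y ∈ Set.univ, x ≤ y →
      edist (stepFunction c b t m y) (stepFunction c b t m x) ≤ edist (V y) (V x) :=
    fun x _ y _ hxy => by
      simp only [edist_dist, Real.dist_eq]
      exact ENNReal.ofReal_le_ofReal ((abs_stepFunction_sub_le hxy).trans (le_abs_self _))
  exact (eVariationOn_le_of_edist_le hdom).trans
    ((stepFunction_monotone fun i => abs_nonneg (b i)).eVariationOn_univ_le
      fun x y => stepFunction_sub_le_sum x y fun i => abs_nonneg (b i))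

theorem stepFunction_eq_of_le_iff {i : ℕ} {y : ℝ} (hi : i ≤ m) (hy : ∀ j, t j ≤ y ↔ j < i) :
    stepFunction c b t m y = c + ∑ j ∈ range i, b j := by
  simp only [stepFunction, hy, mul_ite, mul_one, mul_zero, ← sum_filter]
  congr 2
  ext j
  simp only [mem_filter, mem_range]
  exact and_iff_right_of_imp fun h => h.trans_le hi

theorem eVariationOn_stepFunction (ht : StrictMono t) :
    eVariationOn (stepFunction c b t m) Set.univ = ENNReal.ofReal (∑ i ∈ range m, |b i|) := by
  refine le_antisymm eVariationOn_stepFunction_le ?_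
  set u : ℕ → ℝ := fun i => if i = 0 then t 0 - 1 else t (i - 1)
  have hu : ∀ i j, t j ≤ u i ↔ j < i := by
    rintro (_ | i) j
    · simpa [u] using (ht.monotone j.zero_le).trans_lt' (sub_one_lt (t 0))
    · simp [u, ht.le_iff_le]
  have hmono : Monotone u := monotone_nat_of_le_succ fun i => by
    rcases i with _ | i
    · simp [u]
    · simpa [u] using ht.monotone i.le_succ
  have hjump : ∀ i < m, edist (stepFunction c b t m (u (i + 1))) (stepFunction c b t m (u i)) =
      ENNReal.ofReal |b i| := fun i hi => by
    rw [edist_dist, Real.dist_eq, stepFunction_eq_of_le_iff hi (hu _),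
      stepFunction_eq_of_le_iff hi.le (hu _), sum_range_succ, add_sub_add_left_eq_sub,
      add_sub_cancel_left]
  calc ENNReal.ofReal (∑ i ∈ range m, |b i|)
      = ∑ i ∈ range m, edist (stepFunction c b t m (u (i + 1))) (stepFunction c b t m (u i)) := by
        rw [ENNReal.ofReal_sum_of_nonneg fun i _ => abs_nonneg (b i)]
        exact sum_congr rfl fun i hi => (hjump i (mem_range.1 hi)).symm
    _ ≤ _ := eVariationOn.sum_le hmono fun i => Set.mem_univ (u i)

end StepFunction

/-- Total variation sparsity of the falling factorial expansion: for
`f = ∑_j α_j h_j`, the `k`-th derivative of `f` (away from the knots) is the step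
function `g(x) = k! (α_{k+1} + ∑_{j≥k+2} α_j 1{x ≥ z_{j-k-1+k}})`, whose total
variation equals `k! ∑_{j=k+2}^n |α_j|`  (0-based indices here). -/
theorem falling_factorial_tv_sparsity (n k : ℕ) (hkn : k + 1 ≤ n) (z : ℕ → ℝ)
    (hz : StrictMono z) (a : ℕ → ℝ) :
    (∀ x : ℝ, (∀ j < n, x ≠ z j) →
      iteratedDeriv k (fun t => ∑ j ∈ Finset.range n, a j * ffh k z j t) x =
        (Nat.factorial k : ℝ) *
          (a k + ∑ j ∈ Finset.Ico (k + 1) n, a j * (if z (j - 1) ≤ x then 1 else 0))) ∧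
    eVariationOn
        (fun x : ℝ => (Nat.factorial k : ℝ) *
          (a k + ∑ j ∈ Finset.Ico (k + 1) n, a j * (if z (j - 1) ≤ x then 1 else 0)))
        Set.univ =
      ENNReal.ofReal ((Nat.factorial k : ℝ) * ∑ j ∈ Finset.Ico (k + 1) n, |a j|) := by
  refine ⟨fun x hx => iteratedDeriv_sum_mul_ffh hkn a hx, ?_⟩
  have hstep : (fun x : ℝ => (k ! : ℝ) *
      (a k + ∑ j ∈ Ico (k + 1) n, a j * (if z (j - 1) ≤ x then 1 else 0))) =
      stepFunction (k ! * a k) (fun i => k ! * a (k + 1 + i)) (fun i => z (k + i))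
        (n - (k + 1)) := by
    ext x
    have hknot : ∀ i, k + 1 + i - 1 = k + i := fun i => by omega
    simp only [stepFunction, sum_Ico_eq_sum_range, hknot, mul_add, mul_sum, mul_assoc]
  have hknots : StrictMono fun i => z (k + i) := fun i j hij => hz (by omega)
  rw [hstep, eVariationOn_stepFunction hknots, sum_Ico_eq_sum_range, mul_sum]
  simp only [abs_mul, Nat.abs_cast]
end

section
/- Closeness of the two higher-order KS statistics: for joined sorted samples z_1 < ... < z_{m+n} in [0,1] with maximum gap δ (including from 0), |KS_G^(k)(X,Y) - KS_H^(k)(X,Y)| <= 2 k^2 δ, where KS_G^(k) and KS_H^(k) are the k-th order Kolmogorov-Smirnov statistics defined with the truncated power and falling factorial basis matrices respectively. -/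
/-- Product difference bound for factors in `[0,1]`. -/
lemma abs_prod_sub_prod_le_aux (s : Finset ℕ) (a b : ℕ → ℝ)
    (ha : ∀ i ∈ s, 0 ≤ a i ∧ a i ≤ 1) (hb : ∀ i ∈ s, 0 ≤ b i ∧ b i ≤ 1) :
    |∏ i ∈ s, a i - ∏ i ∈ s, b i| ≤ ∑ i ∈ s, |a i - b i| := by
  induction s using Finset.cons_induction with
  | empty => simp
  | cons x s hx ih =>
    rw [Finset.prod_cons, Finset.prod_cons, Finset.sum_cons]
    have ha' := ha x (Finset.mem_cons_self x s)
    have hb' := hb x (Finset.mem_cons_self x s)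
    have hpb0 : 0 ≤ ∏ i ∈ s, b i := Finset.prod_nonneg fun i hi => (hb i (Finset.mem_cons_of_mem hi)).1
    have hpb1 : ∏ i ∈ s, b i ≤ 1 := Finset.prod_le_one
      (fun i hi => (hb i (Finset.mem_cons_of_mem hi)).1)
      (fun i hi => (hb i (Finset.mem_cons_of_mem hi)).2)
    have ih' := ih (fun i hi => ha i (Finset.mem_cons_of_mem hi))
      (fun i hi => hb i (Finset.mem_cons_of_mem hi))
    calc |a x * ∏ i ∈ s, a i - b x * ∏ i ∈ s, b i|
        = |a x * (∏ i ∈ s, a i - ∏ i ∈ s, b i) + (a x - b x) * ∏ i ∈ s, b i| := by ring_nf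
      _ ≤ |a x * (∏ i ∈ s, a i - ∏ i ∈ s, b i)| + |(a x - b x) * ∏ i ∈ s, b i| := abs_add_le _ _
      _ ≤ 1 * |∏ i ∈ s, a i - ∏ i ∈ s, b i| + |a x - b x| * 1 := by
          rw [abs_mul, abs_mul]
          gcongr
          · rw [abs_of_nonneg ha'.1]; exact ha'.2
          · rw [abs_of_nonneg hpb0]; exact hpb1
      _ ≤ |a x - b x| + ∑ i ∈ s, |a i - b i| := by rw [one_mul, mul_one]; linarith

/-- Gap bound: consecutive gaps at most `δ` imply `z b - z a ≤ (b - a)δ`. -/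
lemma gap_bound_aux (N : ℕ) (z : ℕ → ℝ) (δ : ℝ)
    (hδ : ∀ i, i + 1 < N → z (i + 1) - z i ≤ δ) :
    ∀ a b, a ≤ b → b < N → z b - z a ≤ ((b : ℝ) - a) * δ := by
  intro a b hab hbN
  induction b with
  | zero => interval_cases a; simp
  | succ b ih =>
    rcases Nat.eq_or_lt_of_le hab with h | h
    · subst h; simp
    · have hab' : a ≤ b := Nat.lt_succ_iff.mp h
      have h1 := ih hab' (Nat.lt_of_succ_lt hbN)
      have h2 := hδ b hbN
      push_cast
      push_cast at h1
      linarith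

/-- Entrywise bound between the truncated power and falling factorial entries. -/
lemma entry_bound_aux (N k : ℕ) (z : ℕ → ℝ) (hz : StrictMono z)
    (hb : ∀ i < N, 0 ≤ z i ∧ z i ≤ 1) (δ : ℝ) (hδnn : 0 ≤ δ)
    (hδ : ∀ i, i + 1 < N → z (i + 1) - z i ≤ δ) (hkδ : (k : ℝ) * δ ≤ 1)
    (i j : ℕ) (hi : i < N) (hj : j < N) (hjk : k + 1 ≤ j) :
    |(if j ≤ k then (z i) ^ j else (z i - z (j - (k + 1) / 2)) ^ k *
        (if z (j - (k + 1) / 2) ≤ z i then 1 else 0)) - ffh k z j (z i)| ≤ (k : ℝ) ^ 2 * δ := by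
  have h2 : ¬ j ≤ k := by omega
  rw [ffh, if_neg h2, if_neg h2]
  set c := j - (k + 1) / 2 with hc
  have hgap := gap_bound_aux N z δ hδ
  rcases Nat.eq_zero_or_pos k with hk0 | hk
  · subst hk0
    simp only [pow_zero, Finset.range_zero, Finset.prod_empty, one_mul]
    have hcj : c = j := by omega
    have hiff : (z (j - 1) < z i) ↔ (z j ≤ z i) := by
      rw [hz.lt_iff_lt, hz.le_iff_le]; omega
    rw [hcj]
    rcases le_or_gt (z j) (z i) with h | h
    · rw [if_pos h, if_pos (hiff.mpr h)]; simp
    · rw [if_neg (not_le.mpr h), if_neg (by rw [hiff]; exact not_le.mpr h)]; simp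
  · have hk1 : (1 : ℝ) ≤ (k : ℝ) := by exact_mod_cast hk
    have hcj : c < j := by omega
    have hcjk : j - k ≤ c := by omega
    have hcN : c < N := lt_trans hcj hj
    by_cases hic : i < c
    · have h1 : ¬ z c ≤ z i := not_le.mpr (hz hic)
      have h3 : ¬ z (j - 1) < z i := not_lt.mpr (hz.le_iff_le.mpr (by omega))
      rw [if_neg h1, if_neg h3, mul_zero, mul_zero, sub_zero, abs_zero]
      positivity
    · have hci : c ≤ i := le_of_not_gt hic
      have h1 : z c ≤ z i := hz.le_iff_le.mpr hci
      by_cases hij : i < j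
      · have h3 : ¬ z (j - 1) < z i := not_lt.mpr (hz.le_iff_le.mpr (by omega))
        rw [if_pos h1, if_neg h3, mul_one, mul_zero, sub_zero]
        have hx0 : 0 ≤ z i - z c := sub_nonneg.mpr h1
        have hik : (i : ℝ) - c ≤ (k : ℝ) := by
          have : i ≤ c + k := by omega
          have : (i : ℝ) ≤ (c : ℝ) + k := by exact_mod_cast this
          linarith
        have hxk : z i - z c ≤ (k : ℝ) * δ := by
          have := hgap c i hci hi
          nlinarith
        have hx1 : z i - z c ≤ 1 := le_trans hxk hkδ
        rw [abs_of_nonneg (pow_nonneg hx0 k)]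
        calc (z i - z c) ^ k ≤ (z i - z c) ^ 1 := pow_le_pow_of_le_one hx0 hx1 hk
          _ = z i - z c := pow_one _
          _ ≤ (k : ℝ) * δ := hxk
          _ ≤ (k : ℝ) ^ 2 * δ := by nlinarith
      · have hji : j ≤ i := le_of_not_gt hij
        have h3 : z (j - 1) < z i := hz (by omega)
        rw [if_pos h1, if_pos h3, mul_one, mul_one]
        have hzi1 : z i ≤ 1 := (hb i hi).2
        rw [show (z i - z c) ^ k = ∏ _ℓ ∈ Finset.range k, (z i - z c) by
          rw [Finset.prod_const, Finset.card_range]]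
        have key := abs_prod_sub_prod_le_aux (Finset.range k) (fun _ => z i - z c)
          (fun ℓ => z i - z (j - k + ℓ)) ?_ ?_
        · refine le_trans key ?_
          have hbd : ∀ ℓ ∈ Finset.range k,
              |(fun _ => z i - z c) ℓ - (fun ℓ => z i - z (j - k + ℓ)) ℓ| ≤ (k : ℝ) * δ := by
            intro ℓ hℓ
            have hℓk : ℓ < k := Finset.mem_range.mp hℓ
            set p := j - k + ℓ with hp
            have hpN : p < N := by omega
            have heq : (fun _ => z i - z c) ℓ - (fun ℓ => z i - z (j - k + ℓ)) ℓ
                = z p - z c := by simp only []; ring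
            rw [heq]
            rcases le_total p c with hpc | hpc
            · rw [abs_sub_comm, abs_of_nonneg (sub_nonneg.mpr (hz.le_iff_le.mpr hpc))]
              have := hgap p c hpc hcN
              have hcast : (c : ℝ) - p ≤ (k : ℝ) := by
                have : c ≤ p + k := by omega
                have : (c : ℝ) ≤ (p : ℝ) + k := by exact_mod_cast this
                linarith
              nlinarith
            · rw [abs_of_nonneg (sub_nonneg.mpr (hz.le_iff_le.mpr hpc))]
              have := hgap c p hpc hpN
              have hcast : (p : ℝ) - c ≤ (k : ℝ) := by
                have : p ≤ c + k := by omega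
                have : (p : ℝ) ≤ (c : ℝ) + k := by exact_mod_cast this
                linarith
              nlinarith
          calc ∑ ℓ ∈ Finset.range k, |(fun _ => z i - z c) ℓ - (fun ℓ => z i - z (j - k + ℓ)) ℓ|
              ≤ ∑ _ℓ ∈ Finset.range k, (k : ℝ) * δ := Finset.sum_le_sum hbd
            _ = (k : ℝ) * ((k : ℝ) * δ) := by
                rw [Finset.sum_const, Finset.card_range, nsmul_eq_mul]
            _ = (k : ℝ) ^ 2 * δ := by ring
        · intro ℓ _
          exact ⟨sub_nonneg.mpr h1, by have := (hb c hcN).1; simp; linarith⟩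
        · intro ℓ hℓ
          have hℓk : ℓ < k := Finset.mem_range.mp hℓ
          have hpN : j - k + ℓ < N := by omega
          have hple : j - k + ℓ ≤ i := by omega
          refine ⟨sub_nonneg.mpr (hz.le_iff_le.mpr hple), ?_⟩
          have := (hb _ hpN).1; simp; linarith

/-- Closeness of the two higher-order KS statistics: over joined sorted samples
`z_1 < … < z_{m+n}` in `[0,1]` with maximum gap `δ` (including from `0`) and `kδ ≤ 1`,
the `k`-th order KS statistics built from the truncated power and falling factorial
basis matrices differ by at most `2k²δ`.  Here `w` has entries `1/m` on the `X`-sample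
positions and `-1/n` on the `Y`-sample positions, and the statistics are the maxima of
`|columnᵀ w|` over the last `m+n-k-1` columns. -/
theorem ks_statistics_close (m n k : ℕ) (hm : 0 < m) (hn : 0 < n)
    (z : ℕ → ℝ) (hz : StrictMono z) (hb : ∀ i < m + n, 0 ≤ z i ∧ z i ≤ 1)
    (δ : ℝ) (hδ0 : z 0 ≤ δ) (hδ : ∀ i, i + 1 < m + n → z (i + 1) - z i ≤ δ)
    (hkδ : (k : ℝ) * δ ≤ 1)
    (mem : Fin (m + n) → Prop) [DecidablePred mem]
    (hcard : (Finset.univ.filter mem).card = m)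
    (w : Fin (m + n) → ℝ)
    (hw : ∀ i, w i = if mem i then 1 / (m : ℝ) else -(1 / (n : ℝ)))
    (S : Finset (Fin (m + n))) (hS : S = Finset.univ.filter (fun j : Fin (m + n) => k + 1 ≤ (j : ℕ)))
    (hSne : S.Nonempty) :
    |S.sup' hSne (fun j => |∑ i, tpMatrix (m + n) k z i j * w i|) -
      S.sup' hSne (fun j => |∑ i, ffMatrix (m + n) k z i j * w i|)| ≤
      2 * (k : ℝ) ^ 2 * δ := by
  have hδnn : 0 ≤ δ := le_trans (hb 0 (by omega)).1 hδ0
  have hm' : (m : ℝ) ≠ 0 := Nat.cast_ne_zero.mpr hm.ne'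
  have hn' : (n : ℝ) ≠ 0 := Nat.cast_ne_zero.mpr hn.ne'
  have hsumw : ∑ i, |w i| = 2 := by
    have habs : ∀ i : Fin (m + n), |w i| = if mem i then 1 / (m : ℝ) else 1 / (n : ℝ) := by
      intro i; rw [hw i]; split
      · rw [abs_of_nonneg (by positivity)]
      · rw [abs_neg, abs_of_nonneg (by positivity)]
    rw [Finset.sum_congr rfl (fun i _ => habs i), Finset.sum_ite,
      Finset.sum_const, Finset.sum_const]
    have hcard2 : (Finset.univ.filter (fun i => ¬ mem i)).card = n := by
      have h := Finset.card_filter_add_card_filter_not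
        (s := (Finset.univ : Finset (Fin (m + n)))) (p := mem)
      rw [Finset.card_univ, Fintype.card_fin, hcard] at h
      omega
    rw [hcard, hcard2, nsmul_eq_mul, nsmul_eq_mul, mul_one_div, mul_one_div,
      div_self hm', div_self hn']
    norm_num
  have hcol : ∀ j ∈ S, |(∑ i, tpMatrix (m + n) k z i j * w i) -
      (∑ i, ffMatrix (m + n) k z i j * w i)| ≤ 2 * (k : ℝ) ^ 2 * δ := by
    intro j hjS
    have hjk : k + 1 ≤ (j : ℕ) := by rw [hS] at hjS; simpa using hjS
    rw [← Finset.sum_sub_distrib]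
    calc |∑ i, (tpMatrix (m + n) k z i j * w i - ffMatrix (m + n) k z i j * w i)|
        ≤ ∑ i, |tpMatrix (m + n) k z i j * w i - ffMatrix (m + n) k z i j * w i| :=
          Finset.abs_sum_le_sum_abs _ _
      _ ≤ ∑ i, ((k : ℝ) ^ 2 * δ) * |w i| := by
          apply Finset.sum_le_sum; intro i _
          rw [← sub_mul, abs_mul]
          apply mul_le_mul_of_nonneg_right _ (abs_nonneg _)
          have hE := entry_bound_aux (m + n) k z hz hb δ hδnn hδ hkδ
            (i : ℕ) (j : ℕ) i.2 j.2 hjk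
          simpa only [tpMatrix, ffMatrix, Matrix.of_apply] using hE
      _ = (k : ℝ) ^ 2 * δ * ∑ i, |w i| := by rw [← Finset.mul_sum]
      _ = 2 * (k : ℝ) ^ 2 * δ := by rw [hsumw]; ring
  rw [abs_sub_le_iff]
  constructor
  · rw [sub_le_iff_le_add]
    apply Finset.sup'_le
    intro j hj
    have h1 := hcol j hj
    have h2 := abs_sub_abs_le_abs_sub (∑ i, tpMatrix (m + n) k z i j * w i)
      (∑ i, ffMatrix (m + n) k z i j * w i)
    have h3 := Finset.le_sup' (fun j => |∑ i, ffMatrix (m + n) k z i j * w i|) hj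
    linarith
  · rw [sub_le_iff_le_add]
    apply Finset.sup'_le
    intro j hj
    have h1 := hcol j hj
    have h2 := abs_sub_abs_le_abs_sub (∑ i, ffMatrix (m + n) k z i j * w i)
      (∑ i, tpMatrix (m + n) k z i j * w i)
    rw [abs_sub_comm] at h2
    have h3 := Finset.le_sup' (fun j => |∑ i, tpMatrix (m + n) k z i j * w i|) hj
    linarith
end

section
/- Variational form of the classical KS statistic: for samples x_1,...,x_m and y_1,...,y_n, the supremum over all functions f: R → R of total variation at most 1 of |(1/m)∑_i f(x_i) - (1/n)∑_i f(y_i)| equals max_{z ∈ Z} |(1/m)∑_i 1{x_i <= z} - (1/n)∑_i 1{y_i <= z}|, where Z is the joined sample set. -/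
/-!
Enumerate the joined sample increasingly as `z₀ ≤ ⋯ ≤ z_N`. Summation by parts writes
`(1/m) ∑ f(xᵢ) - (1/n) ∑ f(yᵢ)` as `-∑ⱼ (f(z_{j+1}) - f(z_j)) D(z_j)`, where `D` is the
difference of the two empirical distribution functions; the term `f(z_N)` cancels because both
samples carry mass one. So the left side is at most `TV(f) · max |D|`, and the indicator of
`(-∞, z]` at a maximising `z` attains this bound.
-/

open Finset

section Variation

variable {α : Type*} [LinearOrder α]

theorem MonotoneOn.eVariationOn_le_of_mapsTo_Icc {f : α → ℝ} {s : Set α} {a b : ℝ}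
    (hf : MonotoneOn f s) (hfs : Set.MapsTo f s (Set.Icc a b)) :
    eVariationOn f s ≤ ENNReal.ofReal (b - a) := by
  rw [eVariationOn.eq_biSup_inter_Icc]
  refine iSup₂_le fun q ⟨hq₁, hq₂, _⟩ => ?_
  rw [hf.eVariationOn_eq hq₁ hq₂]
  exact ENNReal.ofReal_le_ofReal (by linarith [(hfs hq₂).2, (hfs hq₁).1])

theorem AntitoneOn.eVariationOn_le_of_mapsTo_Icc {f : α → ℝ} {s : Set α} {a b : ℝ}
    (hf : AntitoneOn f s) (hfs : Set.MapsTo f s (Set.Icc a b)) :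
    eVariationOn f s ≤ ENNReal.ofReal (b - a) := by
  rw [← eVariationOn.comp_ofDual]
  exact hf.dual_left.eVariationOn_le_of_mapsTo_Icc hfs

theorem eVariationOn_ite_le_le_one (z : α) :
    eVariationOn (fun t => if t ≤ z then (1 : ℝ) else 0) Set.univ ≤ 1 := by
  have hanti : AntitoneOn (fun t => if t ≤ z then (1 : ℝ) else 0) Set.univ := by
    intro s _ t _ hst
    by_cases ht : t ≤ z
    · simp [ht, hst.trans ht]
    · simp only [ht, if_false]; split_ifs <;> norm_num
  simpa using hanti.eVariationOn_le_of_mapsTo_Icc (a := 0) (b := 1)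
    fun t _ => by simp only [Set.mem_Icc]; split_ifs <;> norm_num

theorem eVariationOn.ofReal_sum_abs_sub_le {f : α → ℝ} {s : Set α} {u : ℕ → α}
    (hu : Monotone u) (hus : ∀ j, u j ∈ s) (N : ℕ) :
    ENNReal.ofReal (∑ j ∈ range N, |f (u (j + 1)) - f (u j)|) ≤ eVariationOn f s := by
  rw [ENNReal.ofReal_sum_of_nonneg fun j _ => abs_nonneg _]
  simpa only [edist_dist, Real.dist_eq] using eVariationOn.sum_le (f := f) (n := N) hu hus

end Variation

theorem Finset.Nonempty.exists_monotone_enum {α : Type*} [LinearOrder α] {s : Finset α}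
    (hs : s.Nonempty) :
    ∃ (u : ℕ → α) (N : ℕ), Monotone u ∧ (∀ j, u j ∈ s) ∧ ∀ t ∈ s, ∃ r ≤ N, u r = t := by
  obtain ⟨N, hN⟩ := Nat.exists_eq_add_one_of_ne_zero hs.card_pos.ne'
  refine ⟨fun j => s.orderEmbOfFin hN (Fin.clamp j N), N,
    (s.orderEmbOfFin hN).monotone.comp Fin.clamp_monotone, fun j => s.orderEmbOfFin_mem hN _,
    fun t ht => ?_⟩
  obtain ⟨r, rfl⟩ : t ∈ Set.range (s.orderEmbOfFin hN) := by
    rw [s.range_orderEmbOfFin]; exact ht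
  refine ⟨r, Nat.le_of_lt_succ r.2, congrArg _ (Fin.ext ?_)⟩
  simp [Fin.clamp, Nat.le_of_lt_succ r.2]

section Abel

variable {α : Type*} [LinearOrder α] {u : ℕ → α}

theorem Monotone.sub_eq_sum_ite_le (hu : Monotone u) (f : α → ℝ) {r N : ℕ} (hrN : r ≤ N) :
    f (u N) - f (u r) =
      ∑ j ∈ range N, if u r ≤ u j then f (u (j + 1)) - f (u j) else 0 := by
  rw [← sum_range_add_sum_Ico _ hrN, ← sum_Ico_sub (fun j => f (u j)) hrN]
  have hbelow : ∀ j ∈ range r, (if u r ≤ u j then f (u (j + 1)) - f (u j) else 0) = 0 := by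
    intro j hj
    rw [mem_range] at hj
    -- `u` is constant on `[j, r]` as soon as `u r ≤ u j`, so the increment vanishes.
    refine ite_eq_right_iff.mpr fun h => ?_
    rw [le_antisymm ((hu (by omega : j + 1 ≤ r)).trans h) (hu j.le_succ), sub_self]
  rw [sum_eq_zero hbelow, zero_add]
  exact sum_congr rfl fun j hj => (if_pos (hu (mem_Ico.mp hj).1)).symm

variable {ι : Type*} [Fintype ι]

theorem Monotone.sum_mul_eq_neg_sum_mul_sum_ite (hu : Monotone u) (f : α → ℝ) {N : ℕ}
    {p : ι → α} (hp : ∀ i, ∃ r ≤ N, u r = p i) {w : ι → ℝ} (hw : ∑ i, w i = 0) :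
    ∑ i, w i * f (p i) =
      -∑ j ∈ range N, (f (u (j + 1)) - f (u j)) * ∑ i, w i * if p i ≤ u j then 1 else 0 := by
  have hrep : ∀ i, f (p i) = f (u N) -
      ∑ j ∈ range N, if p i ≤ u j then f (u (j + 1)) - f (u j) else 0 := by
    intro i
    obtain ⟨r, hr, hpi⟩ := hp i
    rw [← hpi, ← hu.sub_eq_sum_ite_le f hr, sub_sub_cancel]
  calc ∑ i, w i * f (p i)
      = (∑ i, w i) * f (u N) - ∑ j ∈ range N, ∑ i,
          w i * if p i ≤ u j then f (u (j + 1)) - f (u j) else 0 := by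
        simp_rw [hrep, mul_sub, mul_sum]
        rw [sum_sub_distrib, sum_mul, sum_comm]
    _ = _ := by
        rw [hw, zero_mul, zero_sub, neg_inj]
        refine sum_congr rfl fun j _ => ?_
        rw [mul_sum]
        refine sum_congr rfl fun i _ => ?_
        split_ifs <;> ring

theorem Monotone.abs_sum_mul_le (hu : Monotone u) (f : α → ℝ) {N : ℕ}
    {p : ι → α} (hp : ∀ i, ∃ r ≤ N, u r = p i) {w : ι → ℝ} (hw : ∑ i, w i = 0) {C : ℝ}
    (hC : ∀ j, |∑ i, w i * if p i ≤ u j then 1 else 0| ≤ C) :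
    |∑ i, w i * f (p i)| ≤ (∑ j ∈ range N, |f (u (j + 1)) - f (u j)|) * C := by
  rw [hu.sum_mul_eq_neg_sum_mul_sum_ite f hp hw, abs_neg, sum_mul]
  refine (abs_sum_le_sum_abs _ _).trans (sum_le_sum fun j _ => ?_)
  rw [abs_mul]
  exact mul_le_mul_of_nonneg_left (hC j) (abs_nonneg _)

end Abel

/-- Variational form of the classical KS statistic: the supremum of
`|(1/m)∑ f(x_i) - (1/n)∑ f(y_i)|` over all `f : ℝ → ℝ` of total variation at most `1`
is attained, and equals the maximum over the joined sample points `z` of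
`|(1/m)∑ 1{x_i ≤ z} - (1/n)∑ 1{y_i ≤ z}|`. -/
theorem ks_variational_form (m n : ℕ) (hm : 0 < m) (hn : 0 < n)
    (x : Fin m → ℝ) (y : Fin n → ℝ) (Z : Finset ℝ)
    (hZ : Z = Finset.image x Finset.univ ∪ Finset.image y Finset.univ)
    (hZne : Z.Nonempty) :
    IsGreatest
      {r : ℝ | ∃ f : ℝ → ℝ, eVariationOn f Set.univ ≤ 1 ∧
        r = |(1 / (m : ℝ)) * ∑ i, f (x i) - (1 / (n : ℝ)) * ∑ i, f (y i)|}
      (Z.sup' hZne fun z =>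
        |(1 / (m : ℝ)) * ∑ i, (if x i ≤ z then (1 : ℝ) else 0) -
          (1 / (n : ℝ)) * ∑ i, (if y i ≤ z then (1 : ℝ) else 0)|) := by
  set KS : ℝ → ℝ := fun z => |(1 / (m : ℝ)) * ∑ i, (if x i ≤ z then (1 : ℝ) else 0) -
    (1 / (n : ℝ)) * ∑ i, (if y i ≤ z then (1 : ℝ) else 0)|
  refine ⟨?_, ?_⟩
  · obtain ⟨z, -, hz⟩ := Z.exists_mem_eq_sup' hZne KS
    exact ⟨fun t => if t ≤ z then 1 else 0, eVariationOn_ite_le_le_one z, hz⟩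
  rintro _ ⟨f, hf, rfl⟩
  -- The two samples as one signed measure of total mass zero on `Fin m ⊕ Fin n`.
  let p : Fin m ⊕ Fin n → ℝ := Sum.elim x y
  let w : Fin m ⊕ Fin n → ℝ := Sum.elim (fun _ => 1 / m) (fun _ => -(1 / n))
  have hsplit : ∀ g : ℝ → ℝ, ∑ i, w i * g (p i) =
      (1 / (m : ℝ)) * ∑ i, g (x i) - (1 / (n : ℝ)) * ∑ i, g (y i) := fun g => by
    simp [p, w, Fintype.sum_sum_type, mul_sum, sub_eq_add_neg]
  have hw : ∑ i, w i = 0 := by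
    simpa [hm.ne', hn.ne'] using hsplit fun _ => 1
  obtain ⟨u, N, hu, huZ, hZu⟩ := hZne.exists_monotone_enum
  have hp : ∀ i, ∃ r ≤ N, u r = p i := by
    rintro (i | i) <;> exact hZu _ (by simp [hZ, p])
  have hvar : ∑ j ∈ range N, |f (u (j + 1)) - f (u j)| ≤ 1 :=
    ENNReal.ofReal_le_one.mp
      ((eVariationOn.ofReal_sum_abs_sub_le hu (fun j => Set.mem_univ (u j)) N).trans hf)
  have hKS : ∀ j, |∑ i, w i * if p i ≤ u j then 1 else 0| ≤ Z.sup' hZne KS := fun j => by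
    rw [hsplit fun t => if t ≤ u j then 1 else 0]
    exact Z.le_sup' KS (huZ j)
  rw [← hsplit f]
  calc |∑ i, w i * f (p i)| ≤ (∑ j ∈ range N, |f (u (j + 1)) - f (u j)|) * Z.sup' hZne KS :=
        hu.abs_sum_mul_le f hp hw hKS
    _ ≤ 1 * Z.sup' hZne KS :=
        mul_le_mul_of_nonneg_right hvar ((abs_nonneg _).trans (hKS 0))
    _ = Z.sup' hZne KS := one_mul _
end
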